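/- arXiv:2206.01469 — 3 statements merged into one kernel-verified Lean document; each statement's English description precedes it below -/
import Mathlib

section
/- If X is a simple, connected, 2-edge-connected graph that is a regular p-fold cover of a connected graph Y (p prime), then the number of spanning trees of X is at least p times the number of spanning trees of Y. -/
/-- A multigraph in the dart model: a finite nonempty set of darts, an involution
reversing darts, and an incidence map assigning to each dart its initial vertex.
Semiedges (fixed darts), loops and parallel edges are allowed. -/
structure Multigraph where
  D : Type
  V : Type
  instFintypeD : Fintype D
  instDecEqD : DecidableEq D
  instNonemptyD : Nonempty D
  instFintypeV : Fintype V
  instDecEqV : DecidableEq V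
  inv : D → D
  inv_inv : ∀ x, inv (inv x) = x
  vtx : D → V
  vtx_surj : Function.Surjective vtx

attribute [instance] Multigraph.instFintypeD Multigraph.instDecEqD
  Multigraph.instNonemptyD Multigraph.instFintypeV Multigraph.instDecEqV

namespace Multigraph

variable (X : Multigraph)

/-- The darts emanating from a vertex. -/
def dartsAt (v : X.V) : Finset X.D := Finset.univ.filter (fun x => X.vtx x = v)

/-- One step along a dart belonging to the set `P` of allowed darts. -/
def step (P : Set X.D) (u v : X.V) : Prop :=
  ∃ x, x ∈ P ∧ X.vtx x = u ∧ X.vtx (X.inv x) = v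

/-- Any two vertices are joined by a walk using only darts from `P`. -/
def PreconnectedOn (P : Set X.D) : Prop :=
  ∀ u v : X.V, Relation.ReflTransGen (X.step P) u v

/-- A multigraph is connected if any two vertices are joined by a walk. -/
def Connected : Prop := X.PreconnectedOn Set.univ

/-- Number of edges in an inv-closed set of darts (semiedges count once). -/
def edgeCount (S : Finset X.D) : ℕ :=
  (S.card + (S.filter (fun x => X.inv x = x)).card) / 2

/-- A spanning tree: an inv-closed set of darts which connects all vertices and
has exactly `|V| - 1` edges. -/
def IsSpanningTree (S : Finset X.D) : Prop :=
  (∀ x ∈ S, X.inv x ∈ S) ∧ X.PreconnectedOn ↑S ∧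
    X.edgeCount S = Fintype.card X.V - 1

/-- The number of spanning trees. -/
noncomputable def tau : ℕ := Nat.card {S : Finset X.D // X.IsSpanningTree S}

/-- A simple graph: no loops, no semiedges, no parallel edges. -/
def Simple : Prop :=
  (∀ x, X.vtx x ≠ X.vtx (X.inv x)) ∧
  (∀ x y, X.vtx x = X.vtx y → X.vtx (X.inv x) = X.vtx (X.inv y) → x = y)

/-- `X` is at least `k`-edge-connected: removing fewer than `k` edges
leaves it connected. -/
def EdgeConnectedGE (k : ℕ) : Prop :=
  ∀ S : Finset X.D, (∀ x ∈ S, X.inv x ∈ S) → X.edgeCount S < k →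
    X.PreconnectedOn (↑S)ᶜ

/-- The automorphism group of a multigraph, as a subgroup of the permutations
of the darts: permutations commuting with the dart-reversing involution and
preserving the partition of darts into vertices. -/
def autGroup : Subgroup (Equiv.Perm X.D) where
  carrier := {f | (∀ x, f (X.inv x) = X.inv (f x)) ∧
    ∀ x y, X.vtx x = X.vtx y ↔ X.vtx (f x) = X.vtx (f y)}
  one_mem' := ⟨fun _ => rfl, fun _ _ => Iff.rfl⟩
  mul_mem' := by
    rintro f g ⟨hf1, hf2⟩ ⟨hg1, hg2⟩
    refine ⟨fun x => ?_, fun x y => ?_⟩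
    · simp [Equiv.Perm.mul_apply, hg1, hf1]
    · simp only [Equiv.Perm.mul_apply]
      exact (hg2 x y).trans (hf2 (g x) (g y))
  inv_mem' := by
    rintro f ⟨hf1, hf2⟩
    refine ⟨fun x => f.injective ?_, fun x y => ?_⟩
    · rw [Equiv.Perm.coe_inv, Equiv.apply_symm_apply, hf1, Equiv.apply_symm_apply]
    · have := hf2 (f⁻¹ x) (f⁻¹ y)
      simpa [Equiv.Perm.coe_inv, Equiv.apply_symm_apply] using this.symm

end Multigraph

/-- A covering of multigraphs: a surjective graph homomorphism restricting to a
bijection on the darts at each vertex. -/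
structure Covering (X Y : Multigraph) where
  toFun : X.D → Y.D
  surj : Function.Surjective toFun
  map_inv : ∀ x, toFun (X.inv x) = Y.inv (toFun x)
  map_vtx : ∀ x y, X.vtx x = X.vtx y → Y.vtx (toFun x) = Y.vtx (toFun y)
  loc_inj : ∀ x y, X.vtx x = X.vtx y → toFun x = toFun y → x = y
  loc_surj : ∀ x z, Y.vtx z = Y.vtx (toFun x) →
    ∃ y, X.vtx y = X.vtx x ∧ toFun y = z

namespace Covering

variable {X Y : Multigraph} (ψ : Covering X Y)

/-- The covering is `n`-fold: every fibre has cardinality `n`. -/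
def IsNFold (n : ℕ) : Prop := ∀ z : Y.D, Nat.card {x : X.D // ψ.toFun x = z} = n

/-- The group of covering transformations: automorphisms `f` of `X`
with `ψ ∘ f = ψ`. -/
def CT : Subgroup (Equiv.Perm X.D) where
  carrier := {f | f ∈ X.autGroup ∧ ∀ x, ψ.toFun (f x) = ψ.toFun x}
  one_mem' := ⟨X.autGroup.one_mem, fun _ => rfl⟩
  mul_mem' := by
    rintro f g ⟨hf1, hf2⟩ ⟨hg1, hg2⟩
    exact ⟨X.autGroup.mul_mem hf1 hg1, fun x => by
      simp [Equiv.Perm.mul_apply, hf2, hg2]⟩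
  inv_mem' := by
    rintro f ⟨hf1, hf2⟩
    refine ⟨X.autGroup.inv_mem hf1, fun x => ?_⟩
    conv_rhs => rw [← f.apply_symm_apply x]
    rw [hf2, Equiv.Perm.coe_inv]

/-- The covering is regular: the covering transformations act transitively
(hence regularly) on every fibre. -/
def IsRegular : Prop :=
  ∀ x y, ψ.toFun x = ψ.toFun y → ∃ f ∈ ψ.CT, f x = y

end Covering

namespace Multigraph

variable (X : Multigraph)

/-- Inv-closed sets of darts. -/
def InvClosed (A : Finset X.D) : Prop := ∀ x ∈ A, X.inv x ∈ A

/-- Connectivity relation generated by darts in `A`. -/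
def crel (A : Finset X.D) : X.V → X.V → Prop :=
  Relation.ReflTransGen (X.step (↑A : Set X.D))

variable {X}

lemma step_symm {A : Finset X.D} (hA : X.InvClosed A) :
    Symmetric (X.step (↑A : Set X.D)) := by
  rintro u v ⟨x, hx, h1, h2⟩
  exact ⟨X.inv x, hA x hx, h2, by rw [X.inv_inv]; exact h1⟩

lemma crel_symm {A : Finset X.D} (hA : X.InvClosed A) {u v : X.V}
    (h : X.crel A u v) : X.crel A v u :=
  by
    haveI : Std.Symm (X.step (↑A : Set X.D)) := ⟨fun a b h => step_symm hA h⟩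
    exact Relation.ReflTransGen.symmetric.symm _ _ h

lemma crel_equivalence {A : Finset X.D} (hA : X.InvClosed A) :
    Equivalence (X.crel A) :=
  ⟨fun _ => Relation.ReflTransGen.refl, crel_symm hA, fun h1 h2 => h1.trans h2⟩

lemma crel_mono {A B : Finset X.D} (hAB : A ⊆ B) {u v : X.V}
    (h : X.crel A u v) : X.crel B u v := by
  refine Relation.ReflTransGen.mono
    (?_ : ∀ a b, X.step (↑A : Set X.D) a b → X.step (↑B : Set X.D) a b) u v h
  rintro a b ⟨x, hx, h1, h2⟩
  exact ⟨x, hAB hx, h1, h2⟩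

lemma step_crel {A : Finset X.D} {x : X.D} (hx : x ∈ A) :
    X.crel A (X.vtx x) (X.vtx (X.inv x)) :=
  Relation.ReflTransGen.single ⟨x, hx, rfl, rfl⟩

variable (X)

/-- Number of connected components of the spanning subgraph with dart set `A`. -/
noncomputable def ncomp (A : Finset X.D) : ℕ := Nat.card (Quot (X.crel A))

variable {X}

lemma vertex_nonempty : Nonempty X.V :=
  Nonempty.map X.vtx X.instNonemptyD

lemma quot_mk_eq_iff {A : Finset X.D} (hA : X.InvClosed A) {u v : X.V} :
    Quot.mk (X.crel A) u = Quot.mk (X.crel A) v ↔ X.crel A u v := by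
  rw [Quot.eq, Equivalence.eqvGen_eq (crel_equivalence hA)]

lemma one_le_ncomp (A : Finset X.D) : 1 ≤ X.ncomp A := by
  have : Nonempty (Quot (X.crel A)) := Nonempty.map (Quot.mk _) vertex_nonempty
  exact Nat.one_le_iff_ne_zero.2 (Nat.card_ne_zero.2 ⟨this, Finite.of_surjective _ (Quot.exists_rep)⟩)

lemma ncomp_eq_one_of_preconnected {A : Finset X.D}
    (h : X.PreconnectedOn ↑A) : X.ncomp A = 1 := by
  obtain ⟨v⟩ := vertex_nonempty (X := X)
  refine le_antisymm ?_ (one_le_ncomp A)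
  have : ∀ q : Quot (X.crel A), q = Quot.mk _ v := by
    intro q
    induction q using Quot.ind with
    | _ u => exact Quot.sound (h u v)
  have hsub : Subsingleton (Quot (X.crel A)) := ⟨fun a b => by rw [this a, this b]⟩
  have hne : Nonempty (Quot (X.crel A)) := ⟨Quot.mk _ v⟩
  exact le_of_eq (Nat.card_eq_one_iff_unique.mpr ⟨hsub, hne⟩)

lemma preconnected_of_ncomp_eq_one {A : Finset X.D} (hA : X.InvClosed A)
    (h : X.ncomp A = 1) : X.PreconnectedOn ↑A := by
  intro u v
  have hfin : Finite (Quot (X.crel A)) := Finite.of_surjective _ Quot.exists_rep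
  have hsub : Subsingleton (Quot (X.crel A)) := (Nat.card_eq_one_iff_unique.mp h).1
  exact (quot_mk_eq_iff hA).1 (hsub.allEq _ _)

lemma exists_not_crel_of_ncomp_ne_one {A : Finset X.D} (hA : X.InvClosed A)
    (h : X.ncomp A ≠ 1) : ∃ u v : X.V, ¬ X.crel A u v := by
  by_contra hc
  push_neg at hc
  exact h (ncomp_eq_one_of_preconnected (fun u v => hc u v))

lemma invClosed_union_pair {A : Finset X.D} (hA : X.InvClosed A) (x : X.D) :
    X.InvClosed (A ∪ {x, X.inv x}) := by
  intro y hy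
  rcases Finset.mem_union.1 hy with h | h
  · exact Finset.mem_union_left _ (hA y h)
  · rcases Finset.mem_insert.1 h with rfl | h
    · exact Finset.mem_union_right _ (Finset.mem_insert_of_mem (by simp))
    · rw [Finset.mem_singleton.1 h, X.inv_inv]
      exact Finset.mem_union_right _ (Finset.mem_insert_self _ _)

/-- Adding an edge merges at most the classes of its two endpoints. -/
lemma crel_union_pair {A : Finset X.D} (hA : X.InvClosed A) {x : X.D} {u v : X.V}
    (h : X.crel (A ∪ {x, X.inv x}) u v) :
    X.crel A u v ∨ ((X.crel A u (X.vtx x) ∨ X.crel A u (X.vtx (X.inv x))) ∧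
      (X.crel A v (X.vtx x) ∨ X.crel A v (X.vtx (X.inv x)))) := by
  induction h with
  | refl => exact Or.inl Relation.ReflTransGen.refl
  | @tail w v' _ hstep ih =>
    obtain ⟨y, hy, h1, h2⟩ := hstep
    subst h1 h2
    rcases Finset.mem_union.1 hy with hyA | hyP
    · have hwv : X.crel A (X.vtx y) (X.vtx (X.inv y)) := step_crel hyA
      rcases ih with ih | ⟨ih1, ih2⟩
      · exact Or.inl (ih.trans hwv)
      · refine Or.inr ⟨ih1, ?_⟩
        rcases ih2 with h | h
        · exact Or.inl ((crel_symm hA hwv).trans h)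
        · exact Or.inr ((crel_symm hA hwv).trans h)
    · have hy2 : y = x ∨ y = X.inv x := by
        rcases Finset.mem_insert.1 hyP with h | h
        · exact Or.inl h
        · exact Or.inr (Finset.mem_singleton.1 h)
      have hu : X.crel A u (X.vtx x) ∨ X.crel A u (X.vtx (X.inv x)) := by
        rcases ih with ih | ⟨ih1, _⟩
        · rcases hy2 with rfl | rfl
          · exact Or.inl ih
          · exact Or.inr ih
        · exact ih1
      refine Or.inr ⟨hu, ?_⟩
      rcases hy2 with rfl | rfl
      · exact Or.inr Relation.ReflTransGen.refl
      · exact Or.inl (by rw [X.inv_inv]; exact Relation.ReflTransGen.refl)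

end Multigraph

namespace Multigraph

variable {X : Multigraph}

lemma quot_finite (A : Finset X.D) : Finite (Quot (X.crel A)) :=
  Finite.of_surjective _ Quot.exists_rep

/-- Adding an edge decreases the number of components by at most one. -/
lemma ncomp_le_ncomp_union_pair_add_one {A : Finset X.D} (hA : X.InvClosed A)
    (x : X.D) : X.ncomp A ≤ X.ncomp (A ∪ {x, X.inv x}) + 1 := by
  classical
  haveI hfin := quot_finite (X := X) (A ∪ {x, X.inv x})
  haveI hfin2 := quot_finite (X := X) A
  set b := X.vtx (X.inv x) with hb
  set A' := A ∪ {x, X.inv x} with hA'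
  have hg : ∀ u v : X.V, X.crel A u v →
      (if X.crel A u b then (none : Option (Quot (X.crel A'))) else some (Quot.mk _ u)) =
      (if X.crel A v b then none else some (Quot.mk _ v)) := by
    intro u v h
    by_cases hub : X.crel A u b
    · have hvb : X.crel A v b := (crel_symm hA h).trans hub
      rw [if_pos hub, if_pos hvb]
    · have hvb : ¬ X.crel A v b := fun hvb => hub (h.trans hvb)
      rw [if_neg hub, if_neg hvb]
      exact congrArg some (Quot.sound (crel_mono Finset.subset_union_left h))
  haveI := Fintype.ofFinite (Quot (X.crel A'))
  set f : Quot (X.crel A) → Option (Quot (X.crel A')) :=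
    Quot.lift _ hg with hf
  have hinj : Function.Injective f := by
    intro q1 q2
    induction q1 using Quot.ind with
    | _ u =>
    induction q2 using Quot.ind with
    | _ v =>
    intro huv
    have huv' : (if X.crel A u b then (none : Option (Quot (X.crel A'))) else some (Quot.mk _ u)) =
        (if X.crel A v b then none else some (Quot.mk _ v)) := huv
    by_cases hub : X.crel A u b <;> by_cases hvb : X.crel A v b
    · exact Quot.sound (hub.trans (crel_symm hA hvb))
    · rw [if_pos hub, if_neg hvb] at huv'; exact absurd huv' (by simp)
    · rw [if_neg hub, if_pos hvb] at huv'; exact absurd huv' (by simp)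
    · rw [if_neg hub, if_neg hvb] at huv'
      have h2 : Quot.mk (X.crel A') u = Quot.mk (X.crel A') v := by
        simpa using huv'
      have h3 : X.crel A' u v := (quot_mk_eq_iff (invClosed_union_pair hA x)).1 h2
      rcases crel_union_pair hA h3 with h | ⟨h1, h2⟩
      · exact Quot.sound h
      · rcases h1 with h1 | h1
        · rcases h2 with h2 | h2
          · exact Quot.sound (h1.trans (crel_symm hA h2))
          · exact absurd h2 hvb
        · exact absurd h1 hub
  calc X.ncomp A ≤ Nat.card (Option (Quot (X.crel A'))) :=
        Nat.card_le_card_of_injective f hinj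
    _ = X.ncomp A' + 1 := Finite.card_option

/-- Adding an edge between two distinct components strictly decreases their number. -/
lemma ncomp_union_pair_lt {A : Finset X.D} (hA : X.InvClosed A) {x : X.D}
    (hx : ¬ X.crel A (X.vtx x) (X.vtx (X.inv x))) :
    X.ncomp (A ∪ {x, X.inv x}) < X.ncomp A := by
  classical
  haveI hfin := quot_finite (X := X) (A ∪ {x, X.inv x})
  haveI hfin2 := quot_finite (X := X) A
  set a := X.vtx x with ha
  set b := X.vtx (X.inv x) with hb
  set A' := A ∪ {x, X.inv x} with hA'
  have hA'c : X.InvClosed A' := invClosed_union_pair hA x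
  have hg : ∀ u v : X.V, X.crel A' u v →
      (if X.crel A u b then Quot.mk (X.crel A) a else Quot.mk _ u) =
      (if X.crel A v b then Quot.mk (X.crel A) a else Quot.mk _ v) := by
    intro u v h
    rcases crel_union_pair hA h with h | ⟨h1, h2⟩
    · by_cases hub : X.crel A u b
      · have hvb : X.crel A v b := (crel_symm hA h).trans hub
        rw [if_pos hub, if_pos hvb]
      · have hvb : ¬ X.crel A v b := fun hvb => hub (h.trans hvb)
        rw [if_neg hub, if_neg hvb]
        exact Quot.sound h
    · have key : ∀ w : X.V, X.crel A w a ∨ X.crel A w b →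
          (if X.crel A w b then Quot.mk (X.crel A) a else Quot.mk _ w) =
          Quot.mk (X.crel A) a := by
        intro w hw
        by_cases hwb : X.crel A w b
        · rw [if_pos hwb]
        · rw [if_neg hwb]
          exact Quot.sound (hw.resolve_right hwb)
      rw [key u h1, key v h2]
  set f : Quot (X.crel A') → Quot (X.crel A) := Quot.lift _ hg with hf
  have hinj : Function.Injective f := by
    intro q1 q2
    induction q1 using Quot.ind with
    | _ u =>
    induction q2 using Quot.ind with
    | _ v =>
    intro huv
    have huv' : (if X.crel A u b then Quot.mk (X.crel A) a else Quot.mk _ u) =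
        (if X.crel A v b then Quot.mk (X.crel A) a else Quot.mk _ v) := huv
    have hab : X.crel A' a b := step_crel (Finset.mem_union_right _ (Finset.mem_insert_self _ _))
    apply (quot_mk_eq_iff hA'c).2
    by_cases hub : X.crel A u b <;> by_cases hvb : X.crel A v b
    · exact (crel_mono Finset.subset_union_left hub).trans
        (crel_symm hA'c (crel_mono Finset.subset_union_left hvb))
    · rw [if_pos hub, if_neg hvb] at huv'
      have : X.crel A a v := (quot_mk_eq_iff hA).1 huv'
      exact (crel_mono Finset.subset_union_left hub).trans
        ((crel_symm hA'c hab).trans (crel_mono Finset.subset_union_left this))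
    · rw [if_neg hub, if_pos hvb] at huv'
      have : X.crel A u a := (quot_mk_eq_iff hA).1 huv'
      exact (crel_mono Finset.subset_union_left this).trans
        (hab.trans (crel_symm hA'c (crel_mono Finset.subset_union_left hvb)))
    · rw [if_neg hub, if_neg hvb] at huv'
      exact crel_mono Finset.subset_union_left ((quot_mk_eq_iff hA).1 huv')
  have hnr : Quot.mk (X.crel A) b ∉ Set.range f := by
    rintro ⟨q, hq⟩
    induction q using Quot.ind with
    | _ u =>
    have hq' : (if X.crel A u b then Quot.mk (X.crel A) a else Quot.mk _ u) =
        Quot.mk (X.crel A) b := hq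
    by_cases hub : X.crel A u b
    · rw [if_pos hub] at hq'
      exact hx ((quot_mk_eq_iff hA).1 hq')
    · rw [if_neg hub] at hq'
      exact hub ((quot_mk_eq_iff hA).1 hq')
  haveI := Fintype.ofFinite (Quot (X.crel A'))
  haveI := Fintype.ofFinite (Quot (X.crel A))
  have hlt := Fintype.card_lt_of_injective_of_notMem f hinj hnr
  unfold ncomp
  rw [Nat.card_eq_fintype_card, Nat.card_eq_fintype_card]
  exact hlt

end Multigraph

namespace Multigraph

variable {X : Multigraph}

lemma even_card_of_inv_free : ∀ (t : Finset X.D), (∀ x ∈ t, X.inv x ∈ t) →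
    (∀ x ∈ t, X.inv x ≠ x) → Even t.card := by
  classical
  intro t
  induction t using Finset.strongInduction with
  | _ t ih =>
    intro h1 h2
    rcases Finset.eq_empty_or_nonempty t with rfl | ⟨x, hx⟩
    · simp
    · have hxne : X.inv x ≠ x := h2 x hx
      have hxt : X.inv x ∈ t := h1 x hx
      have hsub : {x, X.inv x} ⊆ t := by
        intro y hy
        rcases Finset.mem_insert.1 hy with rfl | hy
        · exact hx
        · rw [Finset.mem_singleton.1 hy]; exact hxt
      have hss : t \ {x, X.inv x} ⊂ t :=
        Finset.sdiff_ssubset hsub (by simp)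
      have h1' : ∀ y ∈ t \ {x, X.inv x}, X.inv y ∈ t \ {x, X.inv x} := by
        intro y hy
        rw [Finset.mem_sdiff] at hy ⊢
        obtain ⟨hyt, hyp⟩ := hy
        simp only [Finset.mem_insert, Finset.mem_singleton] at hyp ⊢
        push_neg at hyp
        refine ⟨h1 y hyt, ?_⟩
        rintro (h | h)
        · exact hyp.2 (by rw [← h, X.inv_inv])
        · exact hyp.1 (by have := congrArg X.inv h; rwa [X.inv_inv, X.inv_inv] at this)
      have h2' : ∀ y ∈ t \ {x, X.inv x}, X.inv y ≠ y :=
        fun y hy => h2 y (Finset.mem_sdiff.1 hy).1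
      have hpair : ({x, X.inv x} : Finset X.D).card = 2 := by
        rw [Finset.card_insert_of_notMem (by simp [Ne.symm hxne]), Finset.card_singleton]
      have hle : 2 ≤ t.card := by
        have := Finset.card_le_card hsub
        omega
      have hcard : t.card = (t \ {x, X.inv x}).card + 2 := by
        rw [Finset.card_sdiff_of_subset hsub, hpair]
        omega
      obtain ⟨m, hm⟩ := ih _ hss h1' h2'
      exact ⟨m + 1, by omega⟩

lemma two_mul_edgeCount {A : Finset X.D} (hA : X.InvClosed A) :
    2 * X.edgeCount A = A.card + (A.filter (fun x => X.inv x = x)).card := by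
  classical
  have hsplit := Finset.card_filter_add_card_filter_not
    (s := A) (p := fun x => X.inv x = x)
  have heven : Even ((A.filter (fun x => ¬ X.inv x = x)).card) := by
    apply even_card_of_inv_free
    · intro x hx
      rw [Finset.mem_filter] at hx ⊢
      refine ⟨hA x hx.1, ?_⟩
      intro h
      rw [X.inv_inv] at h
      exact hx.2 h.symm
    · intro x hx; exact (Finset.mem_filter.1 hx).2
  have : Even (A.card + (A.filter (fun x => X.inv x = x)).card) := by
    obtain ⟨m, hm⟩ := heven
    exact ⟨(A.filter (fun x => X.inv x = x)).card + m, by omega⟩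
  rw [edgeCount, Nat.two_mul_div_two_of_even this]

/-- In a simple graph there are no semiedges. -/
lemma Simple.inv_ne {X : Multigraph} (hs : X.Simple) (x : X.D) : X.inv x ≠ x :=
  fun h => hs.1 x (by rw [h])

lemma filter_semi_eq_empty (hs : X.Simple) (A : Finset X.D) :
    A.filter (fun x => X.inv x = x) = ∅ :=
  Finset.filter_false_of_mem (fun x _ => hs.inv_ne x)

lemma edgeCount_simple (hs : X.Simple) (A : Finset X.D) :
    X.edgeCount A = A.card / 2 := by
  rw [edgeCount, filter_semi_eq_empty hs]
  simp

lemma two_mul_edgeCount_simple (hs : X.Simple) {A : Finset X.D} (hA : X.InvClosed A) :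
    2 * X.edgeCount A = A.card := by
  rw [two_mul_edgeCount hA, filter_semi_eq_empty hs]
  simp

end Multigraph

namespace Multigraph

variable {X : Multigraph}

lemma edgeCount_union_pair {A : Finset X.D} (hA : X.InvClosed A) {x : X.D}
    (hx : x ∉ A) (hne : X.inv x ≠ x) :
    X.edgeCount (A ∪ {x, X.inv x}) = X.edgeCount A + 1 := by
  classical
  have hinvx : X.inv x ∉ A := fun h => hx (by
    have := hA _ h; rwa [X.inv_inv] at this)
  have hA' : X.InvClosed (A ∪ {x, X.inv x}) := invClosed_union_pair hA x
  have hdisj : Disjoint A {x, X.inv x} := by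
    rw [Finset.disjoint_right]
    intro y hy
    rcases Finset.mem_insert.1 hy with rfl | hy
    · exact hx
    · rw [Finset.mem_singleton.1 hy]; exact hinvx
  have hcard : (A ∪ {x, X.inv x}).card = A.card + 2 := by
    rw [Finset.card_union_of_disjoint hdisj,
      Finset.card_insert_of_notMem (by simp [Ne.symm hne]), Finset.card_singleton]
  have hfix : (A ∪ {x, X.inv x}).filter (fun y => X.inv y = y) =
      A.filter (fun y => X.inv y = y) := by
    rw [Finset.filter_union]
    have : ({x, X.inv x} : Finset X.D).filter (fun y => X.inv y = y) = ∅ := by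
      apply Finset.filter_false_of_mem
      intro y hy
      rcases Finset.mem_insert.1 hy with rfl | hy
      · exact hne
      · rw [Finset.mem_singleton.1 hy]
        intro h; rw [X.inv_inv] at h; exact hne h.symm
    rw [this, Finset.union_empty]
  have h1 := two_mul_edgeCount hA'
  have h2 := two_mul_edgeCount hA
  rw [hcard, hfix] at h1
  omega

lemma edgeCount_erase_semi {A : Finset X.D} (hA : X.InvClosed A) {x : X.D}
    (hx : x ∈ A) (hfix : X.inv x = x) :
    X.edgeCount (A.erase x) + 1 = X.edgeCount A := by
  classical
  have hA' : X.InvClosed (A.erase x) := by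
    intro y hy
    obtain ⟨hne, hyA⟩ := Finset.mem_erase.1 hy
    refine Finset.mem_erase.2 ⟨?_, hA y hyA⟩
    intro h
    exact hne (by rw [← hfix, ← h, X.inv_inv])
  have h1 := two_mul_edgeCount hA'
  have h2 := two_mul_edgeCount hA
  have hxf : x ∈ A.filter (fun y => X.inv y = y) :=
    (Finset.mem_filter (s := A) (p := fun y => X.inv y = y)).2 ⟨hx, hfix⟩
  rw [Finset.filter_erase, Finset.card_erase_of_mem hx,
    Finset.card_erase_of_mem hxf] at h1
  have hc1 : 1 ≤ A.card := Finset.card_pos.2 ⟨x, hx⟩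
  have hc2 : 1 ≤ (A.filter (fun y => X.inv y = y)).card := Finset.card_pos.2 ⟨x, hxf⟩
  omega

lemma invClosed_erase_pair {A : Finset X.D} (hA : X.InvClosed A) (x : X.D) :
    X.InvClosed ((A.erase x).erase (X.inv x)) := by
  intro y hy
  have a := Finset.mem_erase.1 hy
  have b := Finset.mem_erase.1 a.2
  obtain ⟨h1, h2, h3⟩ : y ≠ X.inv x ∧ y ≠ x ∧ y ∈ A := ⟨a.1, b.1, b.2⟩
  refine Finset.mem_erase.2 ⟨?_, Finset.mem_erase.2 ⟨?_, hA y h3⟩⟩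
  · intro h
    exact h2 (by have := congrArg X.inv h; rwa [X.inv_inv, X.inv_inv] at this)
  · intro h
    exact h1 (by have := congrArg X.inv h; rwa [X.inv_inv] at this)

lemma erase_pair_union {A : Finset X.D} (hA : X.InvClosed A) {x : X.D}
    (hx : x ∈ A) : ((A.erase x).erase (X.inv x)) ∪ {x, X.inv x} = A := by
  classical
  ext y
  simp only [Finset.mem_union, Finset.mem_erase, Finset.mem_insert, Finset.mem_singleton]
  constructor
  · rintro (⟨_, _, h⟩ | rfl | rfl)
    · exact h
    · exact hx
    · exact hA x hx
  · intro hy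
    by_cases h1 : y = x
    · exact Or.inr (Or.inl h1)
    · by_cases h2 : y = X.inv x
      · exact Or.inr (Or.inr h2)
      · exact Or.inl ⟨h2, h1, hy⟩

/-- A connected multigraph on `n` vertices with `c` components spanned by `A`
satisfies `n ≤ c + e`. -/
lemma card_le_ncomp_add_edgeCount :
    ∀ (A : Finset X.D), X.InvClosed A →
      Fintype.card X.V ≤ X.ncomp A + X.edgeCount A := by
  classical
  intro A
  induction A using Finset.strongInduction with
  | _ A ih =>
    intro hA
    rcases Finset.eq_empty_or_nonempty A with rfl | ⟨x, hx⟩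
    · -- empty: ncomp = card V
      have hrel : ∀ u v : X.V, X.crel ∅ u v → u = v := by
        intro u v h
        induction h with
        | refl => rfl
        | tail _ hstep ih2 =>
          obtain ⟨y, hy, _, _⟩ := hstep
          simp at hy
      have hsurj : Function.Surjective (Quot.mk (X.crel (∅ : Finset X.D))) :=
        Quot.exists_rep
      have hinj : Function.Injective (Quot.mk (X.crel (∅ : Finset X.D))) := by
        intro u v h
        have := (quot_mk_eq_iff (by intro y hy; simp at hy : X.InvClosed ∅)).1 h
        exact hrel u v this
      have : Fintype.card X.V = X.ncomp ∅ := by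
        rw [← Nat.card_eq_fintype_card, ncomp]
        exact Nat.card_eq_of_bijective _ ⟨hinj, hsurj⟩
      rw [← this]
      simp
    · by_cases hfix : X.inv x = x
      · -- erase semiedge
        have hss : A.erase x ⊂ A := Finset.erase_ssubset hx
        have hA' : X.InvClosed (A.erase x) := by
          intro y hy
          obtain ⟨hne, hyA⟩ := Finset.mem_erase.1 hy
          refine Finset.mem_erase.2 ⟨?_, hA y hyA⟩
          intro h
          exact hne (by rw [← hfix, ← h, X.inv_inv])
        have hcrel : X.crel (A.erase x) = X.crel A := by
          funext u v
          apply propext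
          constructor
          · exact crel_mono (Finset.erase_subset _ _)
          · intro h
            induction h with
            | refl => exact Relation.ReflTransGen.refl
            | tail _ hstep ih2 =>
              obtain ⟨y, hy, h1, h2⟩ := hstep
              by_cases hyx : y = x
              · subst hyx
                rw [hfix] at h2
                rw [← h2, h1]
                exact ih2
              · exact ih2.tail ⟨y, Finset.mem_coe.2 (Finset.mem_erase.2 ⟨hyx, hy⟩), h1, h2⟩
        have hnc : X.ncomp (A.erase x) = X.ncomp A := by
          unfold ncomp; rw [hcrel]
        have := ih _ hss hA'
        have hme := edgeCount_erase_semi hA hx hfix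
        omega
      · -- erase a real edge
        set A' := (A.erase x).erase (X.inv x) with hA'def
        have hss : A' ⊂ A := by
          refine Finset.ssubset_iff_subset_ne.2 ⟨?_, ?_⟩
          · exact ((Finset.erase_subset _ _).trans (Finset.erase_subset _ _))
          · intro h
            have : x ∈ A' := h ▸ hx
            rw [hA'def] at this
            exact (Finset.mem_erase.1 (Finset.mem_erase.1 this).2).1 rfl
        have hA' : X.InvClosed A' := invClosed_erase_pair hA x
        have hunion := erase_pair_union hA hx
        have hxA' : x ∉ A' := by
          intro h
          exact (Finset.mem_erase.1 (Finset.mem_erase.1 h).2).1 rfl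
        have hec : X.edgeCount A = X.edgeCount A' + 1 := by
          rw [← hunion]; exact edgeCount_union_pair hA' hxA' hfix
        have hnc : X.ncomp A' ≤ X.ncomp A + 1 := by
          have := ncomp_le_ncomp_union_pair_add_one hA' x
          rwa [hunion] at this
        have := ih _ hss hA'
        omega

lemma exists_crossing_dart {A : Finset X.D} {P : Set X.D} {u v : X.V}
    (hp : Relation.ReflTransGen (X.step P) u v) (h : ¬ X.crel A u v) :
    ∃ x ∈ P, ¬ X.crel A (X.vtx x) (X.vtx (X.inv x)) := by
  induction hp with
  | refl => exact absurd Relation.ReflTransGen.refl h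
  | @tail w v' _ hstep ih =>
    obtain ⟨y, hy, h1, h2⟩ := hstep
    by_cases hc : X.crel A (X.vtx y) (X.vtx (X.inv y))
    · apply ih
      intro huw
      exact h (huw.trans (by rw [← h1, ← h2]; exact hc))
    · exact ⟨y, hy, hc⟩

/-- Greedy completion of an inv-closed set of darts to a connected spanning set. -/
lemma exists_spanning_superset (hconn : X.Connected) (hs : X.Simple) :
    ∀ (n : ℕ) (A : Finset X.D), X.InvClosed A → X.ncomp A ≤ n →
    ∃ S : Finset X.D, A ⊆ S ∧ X.InvClosed S ∧ X.PreconnectedOn ↑S ∧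
      X.edgeCount S + 1 ≤ X.edgeCount A + X.ncomp A := by
  classical
  intro n
  induction n with
  | zero =>
    intro A hA hn
    exact absurd (one_le_ncomp A) (by omega)
  | succ n ih =>
    intro A hA hn
    by_cases hpre : X.PreconnectedOn (↑A : Set X.D)
    · exact ⟨A, Finset.Subset.refl A, hA, hpre, by
        have := one_le_ncomp (X := X) A; omega⟩
    · have : ∃ u v : X.V, ¬ X.crel A u v := by
        by_contra hc
        push_neg at hc
        exact hpre (fun u v => hc u v)
      obtain ⟨u, v, huv⟩ := this
      obtain ⟨x, _, hx⟩ := exists_crossing_dart (hconn u v) huv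
      have hxA : x ∉ A := fun h => hx (step_crel h)
      have hlt := ncomp_union_pair_lt hA hx
      set A' := A ∪ {x, X.inv x} with hA'def
      have hA' : X.InvClosed A' := invClosed_union_pair hA x
      have hec : X.edgeCount A' = X.edgeCount A + 1 :=
        edgeCount_union_pair hA hxA (hs.inv_ne x)
      obtain ⟨S, hS1, hS2, hS3, hS4⟩ := ih A' hA' (by omega)
      exact ⟨S, (Finset.subset_union_left).trans hS1, hS2, hS3, by omega⟩

end Multigraph

namespace Covering

variable {X Y : Multigraph} (ψ : Covering X Y)

/-- The induced map on vertices. -/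
noncomputable def vmap : X.V → Y.V :=
  fun v => Y.vtx (ψ.toFun (Classical.choose (X.vtx_surj v)))

lemma vmap_vtx (x : X.D) : ψ.vmap (X.vtx x) = Y.vtx (ψ.toFun x) :=
  ψ.map_vtx _ _ (Classical.choose_spec (X.vtx_surj (X.vtx x)))

variable {p : ℕ}

lemma card_vtx_fiber (hfold : ψ.IsNFold p) (w : Y.V) : Nat.card {u : X.V // ψ.vmap u = w} = p := by
  obtain ⟨z, hz⟩ := Y.vtx_surj w
  have hbij : Function.Bijective
      (fun x : {x : X.D // ψ.toFun x = z} => (⟨X.vtx x.1, by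
        rw [ψ.vmap_vtx, x.2, hz]⟩ : {u : X.V // ψ.vmap u = w})) := by
    constructor
    · intro x y hxy
      exact Subtype.ext (ψ.loc_inj x.1 y.1 (congrArg Subtype.val hxy)
        (x.2.trans y.2.symm))
    · rintro ⟨u, hu⟩
      obtain ⟨d, hd⟩ := X.vtx_surj u
      have : Y.vtx z = Y.vtx (ψ.toFun d) := by
        rw [← hd, ψ.vmap_vtx] at hu
        rw [hu, hz]
      obtain ⟨y, hy1, hy2⟩ := ψ.loc_surj d z this
      exact ⟨⟨y, hy2⟩, Subtype.ext (by simpa [hd] using hy1)⟩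
  rw [← Nat.card_eq_of_bijective _ hbij]
  exact hfold z

lemma card_V_eq (hfold : ψ.IsNFold p) : Fintype.card X.V = p * Fintype.card Y.V := by
  classical
  have h := Finset.card_eq_sum_card_fiberwise
    (f := ψ.vmap) (s := Finset.univ) (t := Finset.univ)
    (fun x _ => Finset.mem_univ _)
  have hfib : ∀ w : Y.V, (Finset.univ.filter (fun u => ψ.vmap u = w)).card = p := by
    intro w
    rw [← Fintype.card_subtype, ← Nat.card_eq_fintype_card]
    exact ψ.card_vtx_fiber hfold w
  rw [← Finset.card_univ, h]
  simp only [hfib, Finset.sum_const, Finset.card_univ, smul_eq_mul]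
  ring

lemma card_dart_fiber (hfold : ψ.IsNFold p) (z : Y.D) :
    (Finset.univ.filter (fun x => ψ.toFun x = z)).card = p := by
  classical
  rw [← Fintype.card_subtype, ← Nat.card_eq_fintype_card]
  exact hfold z

lemma card_preimage (hfold : ψ.IsNFold p) (A : Finset Y.D) :
    (Finset.univ.filter (fun x => ψ.toFun x ∈ A)).card = p * A.card := by
  classical
  have h := Finset.card_eq_sum_card_fiberwise
    (f := ψ.toFun) (s := Finset.univ.filter (fun x => ψ.toFun x ∈ A)) (t := A)
    (fun x hx => (Finset.mem_filter.1 hx).2)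
  rw [h]
  have : ∀ z ∈ A, ((Finset.univ.filter (fun x => ψ.toFun x ∈ A)).filter
      (fun x => ψ.toFun x = z)).card = p := by
    intro z hz
    have : (Finset.univ.filter (fun x => ψ.toFun x ∈ A)).filter
        (fun x => ψ.toFun x = z) = Finset.univ.filter (fun x => ψ.toFun x = z) := by
      ext x
      simp only [Finset.mem_filter, Finset.mem_univ, true_and]
      exact ⟨fun h => h.2, fun h => ⟨h ▸ hz, h⟩⟩
    rw [this]
    exact ψ.card_dart_fiber hfold z
  rw [Finset.sum_congr rfl this]
  simp [mul_comm]

/-- A covering transformation with a fixed dart is the identity. -/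
lemma CT_fix (hXconn : X.Connected) {g : Equiv.Perm X.D} (hg : g ∈ ψ.CT)
    {x0 : X.D} (h : g x0 = x0) : g = 1 := by
  obtain ⟨⟨hg1, hg2⟩, hg3⟩ := hg
  set Q : X.V → Prop := fun v => ∀ y, X.vtx y = v → g y = y with hQ
  have step1 : ∀ x : X.D, g x = x → Q (X.vtx x) := by
    intro x hx y hy
    have h1 : X.vtx (g y) = X.vtx y := by
      rw [(hg2 y x).1 hy, hx, hy]
    exact ψ.loc_inj (g y) y h1 (hg3 y)
  have step2 : ∀ u v : X.V, X.step Set.univ u v → Q u → Q v := by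
    rintro u v ⟨y, _, h1, h2⟩ hu
    have hgy : g y = y := hu y h1
    have : g (X.inv y) = X.inv y := by rw [hg1, hgy]
    exact h2 ▸ step1 (X.inv y) this
  have hQ0 : Q (X.vtx x0) := step1 x0 h
  have hall : ∀ v, Q v := by
    intro v
    have hwalk := hXconn (X.vtx x0) v
    clear h
    induction hwalk with
    | refl => exact hQ0
    | tail _ hstep ih => exact step2 _ _ hstep ih
  ext y
  exact hall (X.vtx y) y rfl

lemma card_CT (hfold : ψ.IsNFold p) (hXconn : X.Connected) (hreg : ψ.IsRegular) :
    Nat.card ↥ψ.CT = p := by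
  obtain ⟨x0⟩ := X.instNonemptyD
  have hbij : Function.Bijective
      (fun g : ↥ψ.CT => (⟨g.1 x0, g.2.2 x0⟩ : {x : X.D // ψ.toFun x = ψ.toFun x0})) := by
    constructor
    · intro g h hgh
      have h1 : (h⁻¹ * g : ↥ψ.CT).1 x0 = x0 := by
        have : g.1 x0 = h.1 x0 := congrArg Subtype.val hgh
        show (h⁻¹).1 (g.1 x0) = x0
        rw [this]
        show h.1⁻¹ (h.1 x0) = x0
        simp
      have := ψ.CT_fix hXconn (h⁻¹ * g).2 h1
      have h2 : (h⁻¹ * g : ↥ψ.CT) = 1 := Subtype.ext this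
      exact (inv_mul_eq_one.1 h2).symm
    · rintro ⟨y, hy⟩
      obtain ⟨f, hf, hfx⟩ := hreg x0 y hy.symm
      exact ⟨⟨f, hf⟩, Subtype.ext hfx⟩
  rw [Nat.card_eq_of_bijective _ hbij]
  exact hfold (ψ.toFun x0)

end Covering

namespace Multigraph

variable {X : Multigraph}

/-- Erasing a semiedge does not change connectivity. -/
lemma crel_erase_semi {A : Finset X.D} {x : X.D} (hfix : X.inv x = x) :
    X.crel (A.erase x) = X.crel A := by
  classical
  funext u v
  apply propext
  constructor
  · exact crel_mono (Finset.erase_subset _ _)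
  · intro h
    induction h with
    | refl => exact Relation.ReflTransGen.refl
    | tail _ hstep ih2 =>
      obtain ⟨y, hy, h1, h2⟩ := hstep
      by_cases hyx : y = x
      · subst hyx
        rw [hfix] at h2
        rw [← h2, h1]
        exact ih2
      · exact ih2.tail ⟨y, Finset.mem_coe.2 (Finset.mem_erase.2 ⟨hyx, hy⟩), h1, h2⟩

/-- A spanning tree contains no semiedges. -/
lemma IsSpanningTree.no_semi {T : Finset X.D} (hT : X.IsSpanningTree T) :
    ∀ x ∈ T, X.inv x ≠ x := by
  intro x hx hfix
  have hA : X.InvClosed T := hT.1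
  have hV : 1 ≤ Fintype.card X.V := Fintype.card_pos_iff.2 vertex_nonempty
  have he := edgeCount_erase_semi hA hx hfix
  have hpre : X.PreconnectedOn ↑(T.erase x) := by
    intro u v
    have : X.crel (T.erase x) u v := by
      rw [crel_erase_semi hfix]
      exact hT.2.1 u v
    exact this
  have hnc : X.ncomp (T.erase x) = 1 := ncomp_eq_one_of_preconnected hpre
  have hle := card_le_ncomp_add_edgeCount (X := X) (T.erase x) (by
    intro y hy
    obtain ⟨hne, hyA⟩ := Finset.mem_erase.1 hy
    refine Finset.mem_erase.2 ⟨?_, hA y hyA⟩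
    intro h
    exact hne (by rw [← hfix, ← h, X.inv_inv]))
  rw [hnc] at hle
  have hec := hT.2.2
  omega

/-- A spanning tree has exactly `2(n-1)` darts. -/
lemma IsSpanningTree.card_eq {T : Finset X.D} (hT : X.IsSpanningTree T) :
    T.card = 2 * (Fintype.card X.V - 1) := by
  classical
  have h2e := two_mul_edgeCount (X := X) hT.1
  have : T.filter (fun x => X.inv x = x) = ∅ :=
    Finset.filter_false_of_mem (fun x hx => hT.no_semi x hx)
  rw [this, Finset.card_empty, hT.2.2] at h2e
  omega

/-- The image of a spanning tree under an automorphism is a spanning tree. -/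
lemma IsSpanningTree.image {S : Finset X.D} (hS : X.IsSpanningTree S)
    {g : Equiv.Perm X.D} (hg : g ∈ X.autGroup) :
    X.IsSpanningTree (S.image ⇑g) := by
  classical
  obtain ⟨hg1, hg2⟩ := hg
  -- induced vertex map
  set gV : X.V → X.V := fun v => X.vtx (g (Classical.choose (X.vtx_surj v))) with hgV
  have gV_vtx : ∀ x : X.D, gV (X.vtx x) = X.vtx (g x) := by
    intro x
    exact (hg2 (Classical.choose (X.vtx_surj (X.vtx x))) x).1
      (Classical.choose_spec (X.vtx_surj (X.vtx x)))
  have gV_surj : Function.Surjective gV := by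
    intro u
    obtain ⟨d, hd⟩ := X.vtx_surj u
    exact ⟨X.vtx (g⁻¹ d), by rw [gV_vtx, Equiv.Perm.coe_inv, Equiv.apply_symm_apply, hd]⟩
  refine ⟨?_, ?_, ?_⟩
  · intro y hy
    obtain ⟨x, hx, rfl⟩ := Finset.mem_image.1 hy
    exact Finset.mem_image.2 ⟨X.inv x, hS.1 x hx, hg1 x⟩
  · intro u v
    obtain ⟨u', rfl⟩ := gV_surj u
    obtain ⟨v', rfl⟩ := gV_surj v
    refine Relation.ReflTransGen.lift gV
      (?_ : ∀ a b, X.step (↑S : Set X.D) a b → X.step (↑(S.image ⇑g) : Set X.D) (gV a) (gV b))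
      u' v' (hS.2.1 u' v')
    rintro a b ⟨y, hy, h1, h2⟩
    exact ⟨g y, Finset.mem_coe.2 (Finset.mem_image.2 ⟨y, hy, rfl⟩),
      by rw [← h1, gV_vtx], by rw [← h2, gV_vtx, hg1]⟩
  · have hcard : (S.image ⇑g).card = S.card := Finset.card_image_of_injective _ g.injective
    have hfilt : (S.image ⇑g).filter (fun y => X.inv y = y) =
        (S.filter (fun y => X.inv y = y)).image ⇑g := by
      ext y
      simp only [Finset.mem_filter, Finset.mem_image]
      constructor
      · rintro ⟨⟨x, hx, rfl⟩, hfix⟩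
        refine ⟨x, ⟨hx, ?_⟩, rfl⟩
        have : g (X.inv x) = g x := by rw [hg1]; exact hfix
        exact g.injective this
      · rintro ⟨x, ⟨hx, hfix⟩, rfl⟩
        exact ⟨⟨x, hx, rfl⟩, by rw [← hg1, hfix]⟩
    have : X.edgeCount (S.image ⇑g) = X.edgeCount S := by
      rw [edgeCount, edgeCount, hcard, hfilt,
        Finset.card_image_of_injective _ g.injective]
    rw [this]
    exact hS.2.2

end Multigraph

namespace Covering

variable {X Y : Multigraph} (ψ : Covering X Y) {p : ℕ}

/-- A finite set of darts invariant under a nontrivial covering transformation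
of a regular prime cover has size divisible by `p`. -/
lemma dvd_card_of_invariant (hp : p.Prime) (hfold : ψ.IsNFold p)
    (hXconn : X.Connected) (hreg : ψ.IsRegular) {k : ↥ψ.CT} (hk : k ≠ 1)
    {D : Finset X.D} (hD : ∀ x, x ∈ D ↔ (k : Equiv.Perm X.D) x ∈ D) :
    p ∣ D.card := by
  classical
  haveI : Fact p.Prime := ⟨hp⟩
  have hcard : Nat.card ↥ψ.CT = p := ψ.card_CT hfold hXconn hreg
  have hkp : k ^ p = 1 := by rw [← hcard]; exact pow_card_eq_one'
  have hordk : orderOf k = p := orderOf_eq_prime hkp hk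
  set P : Equiv.Perm X.D → Prop := fun σ => ∀ x, x ∈ D ↔ σ x ∈ D with hPdef
  have hPmul : ∀ σ τ, P σ → P τ → P (σ * τ) := by
    intro σ τ hσ hτ x
    rw [hτ x, hσ (τ x)]
    rfl
  have hPinv : ∀ σ, P σ → P σ⁻¹ := by
    intro σ hσ x
    have := hσ (σ⁻¹ x)
    rw [Equiv.Perm.coe_inv, Equiv.apply_symm_apply] at this
    exact this.symm
  have hPpow : ∀ n : ℕ, P ((k : Equiv.Perm X.D) ^ n) := by
    intro n
    induction n with
    | zero => intro x; simp
    | succ n ih =>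
      rw [pow_succ]
      exact hPmul _ _ ih hD
  have hPzpow : ∀ n : ℤ, P ((k : Equiv.Perm X.D) ^ n) := by
    intro n
    cases n with
    | ofNat m => rw [Int.ofNat_eq_coe, zpow_natCast]; exact hPpow m
    | negSucc m => rw [zpow_negSucc]; exact hPinv _ (hPpow (m + 1))
  have htop : Subgroup.zpowers k = ⊤ := by
    apply Subgroup.eq_top_of_card_eq
    rw [Nat.card_zpowers, hordk, hcard]
  have hPall : ∀ g : ↥ψ.CT, P (g : Equiv.Perm X.D) := by
    intro g
    have hg : g ∈ Subgroup.zpowers k := htop ▸ Subgroup.mem_top g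
    obtain ⟨n, hn⟩ := Subgroup.mem_zpowers_iff.1 hg
    have : ((k ^ n : ↥ψ.CT) : Equiv.Perm X.D) = (k : Equiv.Perm X.D) ^ n := by
      push_cast
      rfl
    rw [← hn, this]
    exact hPzpow n
  letI : SMul ↥ψ.CT {x : X.D // x ∈ D} :=
    ⟨fun g x => ⟨(g : Equiv.Perm X.D) x.1, (hPall g x.1).1 x.2⟩⟩
  letI : MulAction ↥ψ.CT {x : X.D // x ∈ D} :=
    { one_smul := fun x => Subtype.ext (by
        show ((1 : ↥ψ.CT) : Equiv.Perm X.D) x.1 = x.1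
        simp)
      mul_smul := fun g h x => Subtype.ext (by
        show ((g * h : ↥ψ.CT) : Equiv.Perm X.D) x.1 =
          (g : Equiv.Perm X.D) ((h : Equiv.Perm X.D) x.1)
        simp) }
  have hpg : IsPGroup p ↥ψ.CT := IsPGroup.of_card (by rw [hcard, pow_one])
  have hmod := hpg.card_modEq_card_fixedPoints {x : X.D // x ∈ D}
  have hfp : IsEmpty ↥(MulAction.fixedPoints ↥ψ.CT {x : X.D // x ∈ D}) := by
    rw [isEmpty_subtype]
    intro y hy
    have hky := (MulAction.mem_fixedPoints.1 hy) k
    have hfixk : (k : Equiv.Perm X.D) y.1 = y.1 := congrArg Subtype.val hky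
    have h1 := ψ.CT_fix hXconn k.2 hfixk
    exact hk (Subtype.ext h1)
  have hzero : Nat.card ↥(MulAction.fixedPoints ↥ψ.CT {x : X.D // x ∈ D}) = 0 :=
    @Nat.card_of_isEmpty _ hfp
  rw [hzero] at hmod
  have hdvd : p ∣ Nat.card {x : X.D // x ∈ D} := Nat.modEq_zero_iff_dvd.1 hmod
  rwa [Nat.card_eq_fintype_card, Fintype.card_coe] at hdvd

end Covering

namespace Covering

variable {X Y : Multigraph} (ψ : Covering X Y) {p : ℕ}

lemma exists_p_trees (hp : p.Prime) (hsimple : X.Simple) (hXconn : X.Connected)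
    (hX2 : X.EdgeConnectedGE 2) (hfold : ψ.IsNFold p) (hreg : ψ.IsRegular)
    {T : Finset Y.D} (hT : Y.IsSpanningTree T) :
    ∃ f : Fin p → Finset X.D, Function.Injective f ∧
      ∀ i, X.IsSpanningTree (f i) ∧
        (Finset.univ.filter (fun x => ψ.toFun x ∈ T)) ⊆ f i := by
  classical
  set F : Finset X.D := Finset.univ.filter (fun x => ψ.toFun x ∈ T) with hFdef
  have hFinv : X.InvClosed F := by
    intro x hx
    rw [hFdef, Finset.mem_filter] at hx ⊢
    exact ⟨Finset.mem_univ _, by rw [ψ.map_inv]; exact hT.1 _ hx.2⟩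
  have hq1 : 1 ≤ Fintype.card Y.V :=
    Fintype.card_pos_iff.2 (Multigraph.vertex_nonempty (X := Y))
  have hn : Fintype.card X.V = p * Fintype.card Y.V := ψ.card_V_eq hfold
  have hTcard : T.card = 2 * (Fintype.card Y.V - 1) := hT.card_eq
  have hFcard : F.card = p * T.card := ψ.card_preimage hfold T
  have h2eF : 2 * X.edgeCount F = F.card := Multigraph.two_mul_edgeCount_simple hsimple hFinv
  set b : ℕ := Fintype.card Y.V - 1 with hb
  have hqb : Fintype.card Y.V = b + 1 := by omega
  have hnb : Fintype.card X.V = p * b + p := by rw [hn, hqb]; ring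
  have heF : X.edgeCount F = p * b := by
    have h1 : F.card = 2 * (p * b) := by rw [hFcard, hTcard]; ring
    omega
  have hL1 := Multigraph.card_le_ncomp_add_edgeCount (X := X) F hFinv
  have hclow : p ≤ X.ncomp F := by omega
  -- lifting walks in the tree
  have hlift : ∀ (u : X.V) (w : Y.V), Relation.ReflTransGen (Y.step ↑T) (ψ.vmap u) w →
      ∃ u', X.crel F u u' ∧ ψ.vmap u' = w := by
    intro u w h
    induction h with
    | refl => exact ⟨u, Relation.ReflTransGen.refl, rfl⟩
    | @tail w₁ w₂ _ hstep ih =>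
      obtain ⟨u₁, hu₁, hvm⟩ := ih
      obtain ⟨z, hz, hz1, hz2⟩ := hstep
      obtain ⟨d, hd⟩ := X.vtx_surj u₁
      have hvd : Y.vtx z = Y.vtx (ψ.toFun d) := by
        have h1 : Y.vtx (ψ.toFun d) = w₁ := by rw [← ψ.vmap_vtx, hd, hvm]
        rw [h1, hz1]
      obtain ⟨y, hy1, hy2⟩ := ψ.loc_surj d z hvd
      have hyF : y ∈ F := by
        rw [hFdef, Finset.mem_filter]
        exact ⟨Finset.mem_univ _, by rw [hy2]; exact hz⟩
      refine ⟨X.vtx (X.inv y), hu₁.tail ⟨y, Finset.mem_coe.2 hyF, by rw [hy1, hd], rfl⟩, ?_⟩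
      rw [ψ.vmap_vtx, ψ.map_inv, hy2, hz2]
  obtain ⟨w0⟩ : Nonempty Y.V := Multigraph.vertex_nonempty (X := Y)
  have hsurj : Function.Surjective
      (fun u : {u : X.V // ψ.vmap u = w0} => Quot.mk (X.crel F) u.1) := by
    intro qv
    induction qv using Quot.ind with
    | _ v =>
      obtain ⟨u', hu', hw⟩ := hlift v w0 (hT.2.1 (ψ.vmap v) w0)
      exact ⟨⟨u', hw⟩, Quot.sound (Multigraph.crel_symm hFinv hu')⟩
  have hchigh : X.ncomp F ≤ p := by
    have h1 := Nat.card_le_card_of_surjective _ hsurj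
    have h2 := ψ.card_vtx_fiber hfold w0
    unfold Multigraph.ncomp
    omega
  have hcF : X.ncomp F = p := le_antisymm hchigh hclow
  -- complete F to a spanning tree S
  obtain ⟨S, hFS, hSinv, hSpre, hSe⟩ :=
    Multigraph.exists_spanning_superset hXconn hsimple (X.ncomp F) F hFinv le_rfl
  have hSL1 := Multigraph.card_le_ncomp_add_edgeCount (X := X) S hSinv
  have hSnc : X.ncomp S = 1 := Multigraph.ncomp_eq_one_of_preconnected hSpre
  have hSe' : X.edgeCount S = Fintype.card X.V - 1 := by
    rw [hcF] at hSe
    omega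
  have hStree : X.IsSpanningTree S := ⟨hSinv, hSpre, hSe'⟩
  have hp2 : 2 ≤ p := hp.two_le
  have hScard : S.card = 2 * (Fintype.card X.V - 1) := hStree.card_eq
  -- F is invariant under covering transformations
  have hFct : ∀ g : ↥ψ.CT, ∀ x : X.D, x ∈ F ↔ (g : Equiv.Perm X.D) x ∈ F := by
    intro g x
    rw [hFdef, Finset.mem_filter, Finset.mem_filter]
    constructor
    · rintro ⟨-, h2⟩
      exact ⟨Finset.mem_univ _, by rw [g.2.2 x]; exact h2⟩
    · rintro ⟨-, h2⟩
      rw [g.2.2 x] at h2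
      exact ⟨Finset.mem_univ _, h2⟩
  have hFsub : ∀ g : ↥ψ.CT, F ⊆ S.image ⇑(g : Equiv.Perm X.D) := by
    intro g x hx
    have hco : ((g⁻¹ : ↥ψ.CT) : Equiv.Perm X.D) = ((g : ↥ψ.CT) : Equiv.Perm X.D)⁻¹ := rfl
    have hxinv : ((g : ↥ψ.CT) : Equiv.Perm X.D)⁻¹ x ∈ F := by
      have := (hFct g⁻¹ x).1 hx
      rwa [hco] at this
    refine Finset.mem_image.2 ⟨((g : ↥ψ.CT) : Equiv.Perm X.D)⁻¹ x, hFS hxinv, ?_⟩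
    exact Equiv.apply_symm_apply _ _
  by_cases hinj : Function.Injective (fun g : ↥ψ.CT => S.image ⇑(g : Equiv.Perm X.D))
  · haveI : Fintype ↥ψ.CT := Fintype.ofFinite _
    have hcardCT : Fintype.card ↥ψ.CT = p := by
      rw [← Nat.card_eq_fintype_card]
      exact ψ.card_CT hfold hXconn hreg
    set e := Fintype.equivFinOfCardEq hcardCT with he
    refine ⟨fun i => S.image ⇑((e.symm i : ↥ψ.CT) : Equiv.Perm X.D), ?_, ?_⟩
    · intro i j hij
      exact e.symm.injective (hinj hij)
    · intro i
      exact ⟨hStree.image (e.symm i).2.1, hFsub _⟩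
  · -- the stabiliser is nontrivial, forcing p = 2
    rw [Function.Injective] at hinj
    push_neg at hinj
    obtain ⟨g, h, hgh, hne⟩ := hinj
    set k : ↥ψ.CT := h⁻¹ * g with hkdef
    have hk1 : k ≠ 1 := by
      intro hh
      rw [hkdef, inv_mul_eq_one] at hh
      exact hne hh.symm
    have hkS : S.image ⇑(k : Equiv.Perm X.D) = S := by
      have hfun : ⇑((h : Equiv.Perm X.D))⁻¹ ∘ ⇑((g : ↥ψ.CT) : Equiv.Perm X.D) =
          ⇑((k : ↥ψ.CT) : Equiv.Perm X.D) := by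
        funext x
        rfl
      calc S.image ⇑(k : Equiv.Perm X.D)
          = (S.image ⇑((g : ↥ψ.CT) : Equiv.Perm X.D)).image ⇑((h : Equiv.Perm X.D))⁻¹ := by
            rw [Finset.image_image, hfun]
        _ = (S.image ⇑((h : ↥ψ.CT) : Equiv.Perm X.D)).image ⇑((h : Equiv.Perm X.D))⁻¹ := by
            rw [hgh]
        _ = S := by
            rw [Finset.image_image]
            have : ⇑((h : Equiv.Perm X.D))⁻¹ ∘ ⇑((h : ↥ψ.CT) : Equiv.Perm X.D) = id := by
              funext x
              exact Equiv.symm_apply_apply _ _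
            rw [this, Finset.image_id]
    set D : Finset X.D := S \ F with hDdef
    have hFc2 : F.card = 2 * (p * b) := by rw [hFcard, hTcard]; ring
    have hDcard : D.card = 2 * p - 2 := by
      rw [hDdef, Finset.card_sdiff_of_subset hFS, hScard, hFc2, hnb]
      have : 2 * (p * b + p - 1) = 2 * (p * b) + (2 * p - 2) := by omega
      omega
    have hDinv_k : ∀ x, x ∈ D ↔ (k : Equiv.Perm X.D) x ∈ D := by
      intro x
      rw [hDdef, Finset.mem_sdiff, Finset.mem_sdiff]
      constructor
      · rintro ⟨hxS, hxF⟩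
        refine ⟨?_, fun hc => hxF ((hFct k x).2 hc)⟩
        rw [← hkS]
        exact Finset.mem_image_of_mem _ hxS
      · rintro ⟨hxS, hxF⟩
        refine ⟨?_, fun hc => hxF ((hFct k x).1 hc)⟩
        rw [← hkS] at hxS
        obtain ⟨y, hy, hxy⟩ := Finset.mem_image.1 hxS
        rwa [← (k : Equiv.Perm X.D).injective hxy]
    have hdvd := ψ.dvd_card_of_invariant hp hfold hXconn hreg hk1 hDinv_k
    rw [hDcard] at hdvd
    have hpdvd2 : p ∣ 2 := by
      have h2p : p ∣ 2 * p := dvd_mul_left p 2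
      have := Nat.dvd_sub h2p hdvd
      rwa [show 2 * p - (2 * p - 2) = 2 by omega] at this
    have hp2' : p = 2 := (Nat.prime_dvd_prime_iff_eq hp Nat.prime_two).1 hpdvd2
    subst hp2'
    -- p = 2 : use 2-edge-connectivity to find a second tree through F
    have hDpos : 0 < D.card := by omega
    obtain ⟨x0, hx0⟩ := Finset.card_pos.1 hDpos
    have hx0ne : X.inv x0 ≠ x0 := hsimple.inv_ne x0
    have hDinvC : X.InvClosed D := by
      intro y hy
      rw [hDdef, Finset.mem_sdiff] at hy ⊢
      exact ⟨hSinv y hy.1, fun hc => hy.2 (by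
        have := hFinv _ hc
        rwa [X.inv_inv] at this)⟩
    have hpairD : ({x0, X.inv x0} : Finset X.D) ⊆ D := by
      intro y hy
      rcases Finset.mem_insert.1 hy with rfl | hy
      · exact hx0
      · rw [Finset.mem_singleton.1 hy]
        exact hDinvC x0 hx0
    have hpaircard : ({x0, X.inv x0} : Finset X.D).card = 2 := by
      rw [Finset.card_insert_of_notMem (by simp [Ne.symm hx0ne]), Finset.card_singleton]
    have hDeq : D = {x0, X.inv x0} := by
      refine (Finset.eq_of_subset_of_card_le hpairD ?_).symm
      omega
    have hpairinv : X.InvClosed {x0, X.inv x0} := by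
      intro y hy
      rcases Finset.mem_insert.1 hy with rfl | hy
      · exact Finset.mem_insert_of_mem (by simp)
      · rw [Finset.mem_singleton.1 hy, X.inv_inv]
        exact Finset.mem_insert_self _ _
    have hpairE : X.edgeCount {x0, X.inv x0} < 2 := by
      have := Multigraph.two_mul_edgeCount_simple hsimple hpairinv
      omega
    have hBconn := hX2 {x0, X.inv x0} hpairinv hpairE
    obtain ⟨u, v, huv⟩ := Multigraph.exists_not_crel_of_ncomp_ne_one hFinv
      (by rw [hcF]; omega)
    obtain ⟨x', hx'P, hx'⟩ := Multigraph.exists_crossing_dart (hBconn u v) huv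
    have hx'F : x' ∉ F := fun hmem => hx' (Multigraph.step_crel hmem)
    have hS'nc : X.ncomp (F ∪ {x', X.inv x'}) = 1 := by
      have hlt := Multigraph.ncomp_union_pair_lt hFinv hx'
      have hge := Multigraph.one_le_ncomp (X := X) (F ∪ {x', X.inv x'})
      omega
    have hS'e : X.edgeCount (F ∪ {x', X.inv x'}) = Fintype.card X.V - 1 := by
      rw [Multigraph.edgeCount_union_pair hFinv hx'F (hsimple.inv_ne x'), heF, hnb]
      omega
    have hS'tree : X.IsSpanningTree (F ∪ {x', X.inv x'}) :=
      ⟨Multigraph.invClosed_union_pair hFinv x',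
        Multigraph.preconnected_of_ncomp_eq_one
          (Multigraph.invClosed_union_pair hFinv x') hS'nc, hS'e⟩
    have hS'S : F ∪ {x', X.inv x'} ≠ S := by
      intro hc
      have hx'S : x' ∈ S := by
        rw [← hc]
        exact Finset.mem_union_right _ (Finset.mem_insert_self _ _)
      have : x' ∈ F ∪ D := by
        rw [hDdef, Finset.union_sdiff_of_subset hFS]
        exact hx'S
      rcases Finset.mem_union.1 this with hmem | hmem
      · exact hx'F hmem
      · rw [hDeq] at hmem
        exact hx'P hmem
    refine ⟨fun i => if i = 0 then S else F ∪ {x', X.inv x'}, ?_, ?_⟩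
    · intro i j hij
      dsimp only at hij
      by_cases hi : i = 0 <;> by_cases hj : j = 0
      · rw [hi, hj]
      · rw [if_pos hi, if_neg hj] at hij
        exact absurd hij (fun hh => hS'S hh.symm)
      · rw [if_neg hi, if_pos hj] at hij
        exact absurd hij hS'S
      · rw [Fin.eq_one_of_ne_zero i hi, Fin.eq_one_of_ne_zero j hj]
    · intro i
      dsimp only
      by_cases hi : i = 0
      · rw [if_pos hi]
        exact ⟨hStree, hFS⟩
      · rw [if_neg hi]
        exact ⟨hS'tree, Finset.subset_union_left⟩

end Covering

namespace Covering

variable {X Y : Multigraph} (ψ : Covering X Y) {p : ℕ}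

lemma tree_eq_of_subsets (hp1 : 1 ≤ p) (hsimple : X.Simple) (hfold : ψ.IsNFold p)
    {T T' : Finset Y.D} (hT : Y.IsSpanningTree T) (hT' : Y.IsSpanningTree T')
    {S : Finset X.D} (hS : X.IsSpanningTree S)
    (h1 : Finset.univ.filter (fun x => ψ.toFun x ∈ T) ⊆ S)
    (h2 : Finset.univ.filter (fun x => ψ.toFun x ∈ T') ⊆ S) : T = T' := by
  classical
  by_contra hne
  have hq1 : 1 ≤ Fintype.card Y.V :=
    Fintype.card_pos_iff.2 (Multigraph.vertex_nonempty (X := Y))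
  set b : ℕ := Fintype.card Y.V - 1 with hb
  have hqb : Fintype.card Y.V = b + 1 := by omega
  have hn : Fintype.card X.V = p * Fintype.card Y.V := ψ.card_V_eq hfold
  have hnb : Fintype.card X.V = p * b + p := by rw [hn, hqb]; ring
  have hTc : T.card = 2 * b := hT.card_eq
  have hT'c : T'.card = 2 * b := hT'.card_eq
  have hnotsub : ¬ T' ⊆ T := by
    intro hsub
    exact hne (Finset.eq_of_subset_of_card_le hsub (by omega)).symm
  obtain ⟨z, hzT', hzT⟩ := Finset.not_subset.1 hnotsub
  have hzinvT' : Y.inv z ∈ T' := hT'.1 z hzT'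
  have hzinvT : Y.inv z ∉ T := by
    intro hc
    have := hT.1 _ hc
    rw [Y.inv_inv] at this
    exact hzT this
  have hzne : Y.inv z ≠ z := hT'.no_semi z hzT'
  have hdisj : Disjoint T ({z, Y.inv z} : Finset Y.D) := by
    rw [Finset.disjoint_right]
    intro y hy
    rcases Finset.mem_insert.1 hy with rfl | hy
    · exact hzT
    · rw [Finset.mem_singleton.1 hy]; exact hzinvT
  have hsubU : T ∪ {z, Y.inv z} ⊆ T ∪ T' := by
    intro y hy
    rcases Finset.mem_union.1 hy with hy | hy
    · exact Finset.mem_union_left _ hy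
    · rcases Finset.mem_insert.1 hy with rfl | hy
      · exact Finset.mem_union_right _ hzT'
      · rw [Finset.mem_singleton.1 hy]; exact Finset.mem_union_right _ hzinvT'
  have hUcard : 2 * b + 2 ≤ (T ∪ T').card := by
    have hc := Finset.card_le_card hsubU
    rw [Finset.card_union_of_disjoint hdisj, hTc,
      Finset.card_insert_of_notMem (by simp [Ne.symm hzne]), Finset.card_singleton] at hc
    omega
  have hFU : Finset.univ.filter (fun x => ψ.toFun x ∈ T ∪ T') ⊆ S := by
    intro x hx
    rw [Finset.mem_filter] at hx
    rcases Finset.mem_union.1 hx.2 with hmem | hmem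
    · exact h1 (Finset.mem_filter.2 ⟨Finset.mem_univ _, hmem⟩)
    · exact h2 (Finset.mem_filter.2 ⟨Finset.mem_univ _, hmem⟩)
  have hFUcard : (Finset.univ.filter (fun x => ψ.toFun x ∈ T ∪ T')).card
      = p * (T ∪ T').card := ψ.card_preimage hfold (T ∪ T')
  have hScard : S.card = 2 * (Fintype.card X.V - 1) := hS.card_eq
  have hle := Finset.card_le_card hFU
  rw [hFUcard, hScard, hnb] at hle
  have hmul : p * (2 * b + 2) ≤ p * (T ∪ T').card := Nat.mul_le_mul_left p hUcard
  have hpb : p * (2 * b + 2) = 2 * (p * b) + 2 * p := by ring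
  omega

end Covering

/-- If `X` is a simple, connected, 2-edge-connected graph which is a regular
`p`-fold cover (`p` prime) of a connected graph `Y`, then
`τ(X) ≥ p · τ(Y)`. -/
theorem tau_ge_of_regular_prime_cover (X Y : Multigraph) (ψ : Covering X Y)
    (p : ℕ) (hp : p.Prime) (hsimple : X.Simple) (hXconn : X.Connected)
    (hX2 : X.EdgeConnectedGE 2) (hYconn : Y.Connected)
    (hfold : ψ.IsNFold p) (hreg : ψ.IsRegular) :
    p * Y.tau ≤ X.tau := by
  classical
  have h := fun (T : {T : Finset Y.D // Y.IsSpanningTree T}) =>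
    ψ.exists_p_trees hp hsimple hXconn hX2 hfold hreg T.2
  choose f hinj hprop using h
  set Φ : Fin p × {T : Finset Y.D // Y.IsSpanningTree T} →
      {S : Finset X.D // X.IsSpanningTree S} :=
    fun iT => ⟨f iT.2 iT.1, (hprop iT.2 iT.1).1⟩ with hΦ
  have hΦinj : Function.Injective Φ := by
    rintro ⟨i, T⟩ ⟨j, T'⟩ hij
    have hval : f T i = f T' j := congrArg Subtype.val hij
    have hTT' : T.1 = T'.1 := by
      refine ψ.tree_eq_of_subsets hp.one_lt.le hsimple hfold T.2 T'.2
        (hprop T i).1 (hprop T i).2 ?_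
      rw [hval]
      exact (hprop T' j).2
    have hTT : T = T' := Subtype.ext hTT'
    subst hTT
    have hii : i = j := hinj T (by rw [hval])
    rw [hii]
  calc p * Y.tau = Nat.card (Fin p) * Nat.card {T : Finset Y.D // Y.IsSpanningTree T} := by
        rw [Nat.card_eq_fintype_card, Fintype.card_fin]
        rfl
    _ = Nat.card (Fin p × {T : Finset Y.D // Y.IsSpanningTree T}) :=
        (Nat.card_prod _ _).symm
    _ ≤ Nat.card {S : Finset X.D // X.IsSpanningTree S} :=
        Nat.card_le_card_of_injective Φ hΦinj
    _ = X.tau := rfl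
end

section
/- Let X = Cay(G, S) be a connected Cayley graph of a finite nonabelian group G with S = S⁻¹ a generating set of non-identity elements, |S| ≥ 3. Then the Jacobian (critical group) of X is not cyclic. -/
/-- The Cayley graph of a group `G` with respect to a symmetric set `S` of
non-identity elements: `g` is adjacent to `h` iff `g⁻¹ * h ∈ S`. -/
def cayleyGraph (G : Type) [Group G] [DecidableEq G] (S : Finset G)
    (hS : ∀ s ∈ S, s⁻¹ ∈ S) (h1 : (1 : G) ∉ S) : SimpleGraph G where
  Adj g h := g⁻¹ * h ∈ S
  symm := by
    constructor
    intro g h hgh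
    have := hS _ hgh
    simpa [mul_inv_rev] using this
  loopless := by
    constructor
    intro g hg
    simp only [inv_mul_cancel] at hg
    exact h1 hg

instance (G : Type) [Group G] [DecidableEq G] (S : Finset G)
    (hS : ∀ s ∈ S, s⁻¹ ∈ S) (h1 : (1 : G) ∉ S) :
    DecidableRel (cayleyGraph G S hS h1).Adj := fun g h => by
  unfold cayleyGraph
  infer_instance

/-- The divisors of degree zero of a graph on the finite vertex set `V`. -/
def div0 (V : Type) [Fintype V] : AddSubgroup (V → ℤ) where
  carrier := {f | ∑ v, f v = 0}
  zero_mem' := by simp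
  add_mem' := by
    intro a b ha hb
    simp only [Set.mem_setOf_eq, Pi.add_apply, Finset.sum_add_distrib] at *
    simp [ha, hb]
  neg_mem' := by
    intro a ha
    simp only [Set.mem_setOf_eq, Pi.neg_apply, Finset.sum_neg_distrib] at *
    simp [ha]

/-- The critical group (Jacobian) of a finite simple graph: degree-zero integer
divisors modulo the image of the Laplacian; equivalently, the torsion part of
the cokernel of the Laplacian. -/
def criticalGroup {V : Type} [Fintype V] [DecidableEq V] (X : SimpleGraph V)
    [DecidableRel X.Adj] : Type :=
  div0 V ⧸ (((X.lapMatrix ℤ).mulVecLin.toAddMonoidHom.range).addSubgroupOf (div0 V))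

noncomputable instance {V : Type} [Fintype V] [DecidableEq V] (X : SimpleGraph V)
    [DecidableRel X.Adj] : AddCommGroup (criticalGroup X) :=
  QuotientAddGroup.Quotient.addCommGroup _

set_option linter.unusedSectionVars false


open Finset

section CutLemma

variable {G : Type} [Group G] [Fintype G] [DecidableEq G]

/-- number of directed boundary edges of `A` in the Cayley graph of `S`. -/
def outP (S : Finset G) (A : Finset G) : ℕ :=
  ∑ x : G, ∑ s ∈ S, if x ∈ A ∧ x * s ∉ A then 1 else 0

lemma outP_submodular (S A B : Finset G) :
    outP S (A ∩ B) + outP S (A ∪ B) ≤ outP S A + outP S B := by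
  unfold outP
  rw [← Finset.sum_add_distrib, ← Finset.sum_add_distrib]
  refine Finset.sum_le_sum fun x _ => ?_
  rw [← Finset.sum_add_distrib, ← Finset.sum_add_distrib]
  refine Finset.sum_le_sum fun s _ => ?_
  by_cases hA : x ∈ A <;> by_cases hB : x ∈ B <;>
    by_cases hA' : x * s ∈ A <;> by_cases hB' : x * s ∈ B <;>
    simp [hA, hB, hA', hB']

lemma outP_image (S A : Finset G) (g : G) :
    outP S (A.image (g * ·)) = outP S A := by
  unfold outP
  rw [← Equiv.sum_comp (Equiv.mulLeft g) (fun x => ∑ s ∈ S, if x ∈ A.image (g * ·) ∧ x * s ∉ A.image (g * ·) then 1 else 0)]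
  refine Finset.sum_congr rfl fun x _ => Finset.sum_congr rfl fun s _ => ?_
  have h1 : ∀ y : G, g * y ∈ A.image (g * ·) ↔ y ∈ A := by
    intro y
    simp only [Finset.mem_image]
    constructor
    · rintro ⟨z, hz, hzy⟩; rwa [mul_left_cancel hzy] at hz
    · exact fun hy => ⟨y, hy, rfl⟩
  simp only [Equiv.coe_mulLeft, mul_assoc, h1]

lemma outP_compl (S : Finset G) (hS : ∀ s ∈ S, s⁻¹ ∈ S) (A : Finset G) :
    outP S Aᶜ = outP S A := by
  unfold outP
  rw [← Finset.sum_product', ← Finset.sum_product']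
  refine Finset.sum_nbij' (fun p => (p.1 * p.2, p.2⁻¹)) (fun p => (p.1 * p.2, p.2⁻¹)) ?_ ?_ ?_ ?_ ?_
  · rintro ⟨x, s⟩ hp
    simp only [Finset.mem_product, Finset.mem_univ, true_and] at hp ⊢
    exact hS s hp
  · rintro ⟨x, s⟩ hp
    simp only [Finset.mem_product, Finset.mem_univ, true_and] at hp ⊢
    exact hS s hp
  · rintro ⟨x, s⟩ _; simp [mul_assoc]
  · rintro ⟨x, s⟩ _; simp [mul_assoc]
  · rintro ⟨x, s⟩ _
    simp only [mul_assoc, mul_inv_cancel, mul_one, Finset.mem_compl]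
    by_cases h1 : x ∈ A <;> by_cases h2 : x * s ∈ A <;> simp [h1, h2]

/-- the cut lemma : every nonempty proper subset has at least 3 boundary edges. -/
lemma cut_lemma (S : Finset G) (hS : ∀ s ∈ S, s⁻¹ ∈ S) (h1 : (1 : G) ∉ S)
    (hgen : Subgroup.closure (S : Set G) = ⊤) (hcard : 3 ≤ S.card)
    (hnt : ∃ g : G, g ≠ 1) :
    ∀ A : Finset G, A.Nonempty → A ≠ Finset.univ → 3 ≤ outP S A := by
  classical
  set F : Finset (Finset G) := Finset.univ.filter
      (fun A : Finset G => A.Nonempty ∧ A ≠ Finset.univ) with hF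
  have hmemF : ∀ A : Finset G, A ∈ F ↔ (A.Nonempty ∧ A ≠ Finset.univ) := by
    intro A; simp [hF]
  obtain ⟨g0, hg0⟩ := hnt
  have hFne : F.Nonempty := by
    refine ⟨{1}, (hmemF _).2 ⟨⟨1, Finset.mem_singleton_self 1⟩, ?_⟩⟩
    intro h
    have : g0 ∈ ({1} : Finset G) := h ▸ Finset.mem_univ g0
    exact hg0 (Finset.mem_singleton.1 this)
  obtain ⟨A₁, hA₁F, hA₁min⟩ := Finset.exists_min_image F (outP S) hFne
  set lam := outP S A₁ with hlam
  -- it suffices to show 3 ≤ lam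
  suffices h3 : 3 ≤ lam by
    intro A hne hproper
    exact le_trans h3 (hA₁min A ((hmemF A).2 ⟨hne, hproper⟩))
  set M : Finset (Finset G) := F.filter (fun A => outP S A = lam) with hM
  have hmemM : ∀ A : Finset G, A ∈ M ↔ (A.Nonempty ∧ A ≠ Finset.univ ∧ outP S A = lam) := by
    intro A; simp [hM, hmemF, and_assoc]
  have hMne : M.Nonempty := ⟨A₁, (hmemM _).2 ⟨((hmemF _).1 hA₁F).1, ((hmemF _).1 hA₁F).2, rfl⟩⟩
  obtain ⟨A₀, hA₀M, hA₀min⟩ := Finset.exists_min_image M Finset.card hMne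
  obtain ⟨hA₀ne, hA₀proper, hA₀out⟩ := (hmemM A₀).1 hA₀M
  -- translate A₀ to contain 1
  obtain ⟨a₀, ha₀⟩ := hA₀ne
  set A := A₀.image (a₀⁻¹ * ·) with hA
  have hAcard : A.card = A₀.card := Finset.card_image_of_injective _ (mul_right_injective a₀⁻¹)
  have h1A : (1 : G) ∈ A := by
    rw [hA]; exact Finset.mem_image.2 ⟨a₀, ha₀, inv_mul_cancel a₀⟩
  have hAM : A ∈ M := by
    refine (hmemM _).2 ⟨⟨1, h1A⟩, ?_, by rw [hA, outP_image]; exact hA₀out⟩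
    intro huniv
    have : A₀.card = Fintype.card G := by
      rw [← hAcard, huniv, Finset.card_univ]
    exact hA₀proper (Finset.card_eq_iff_eq_univ A₀ |>.1 this)
  have hAmin : ∀ B ∈ M, A.card ≤ B.card := by
    intro B hB; rw [hAcard]; exact hA₀min B hB
  obtain ⟨hAne, hAproper, hAout⟩ := (hmemM A).1 hAM
  have hAhalf : A.card ≤ Aᶜ.card := by
    refine hAmin _ ((hmemM _).2 ⟨?_, ?_, by rw [outP_compl S hS]; exact hAout⟩)
    · rwa [← Finset.compl_ne_univ_iff_nonempty, compl_compl]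
    · rw [Ne, Finset.compl_eq_univ_iff]
      intro h0; exact hAne.ne_empty h0
  -- block property
  have hblock : ∀ g : G, A.image (g * ·) = A ∨ (A.image (g * ·)) ∩ A = ∅ := by
    intro g
    by_contra hcon
    push_neg at hcon
    obtain ⟨hBneq, hBint⟩ := hcon
    set B := A.image (g * ·) with hB
    have hBcard : B.card = A.card := Finset.card_image_of_injective _ (mul_right_injective g)
    have hBM : B ∈ M := by
      refine (hmemM _).2 ⟨hAne.image _, ?_, by rw [hB, outP_image]; exact hAout⟩
      intro hBuniv
      have : A.card = Fintype.card G := by rw [← hBcard, hBuniv, Finset.card_univ]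
      exact hAproper (Finset.card_eq_iff_eq_univ A |>.1 this)
    have hintne : (A ∩ B).Nonempty := by
      rw [Finset.inter_comm]; exact hBint
    have hunion : (A ∪ B) ≠ Finset.univ := by
      intro huniv
      have h1' : (A ∪ B).card + (A ∩ B).card = A.card + B.card :=
        Finset.card_union_add_card_inter A B
      have h2' : Aᶜ.card = Fintype.card G - A.card := Finset.card_compl A
      have h3' : A.card ≤ Fintype.card G := Finset.card_le_univ A
      have h4' : (A ∪ B).card = Fintype.card G := by rw [huniv, Finset.card_univ]
      have h5' : 1 ≤ (A ∩ B).card := Finset.card_pos.2 hintne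
      omega
    have hinterM : A ∩ B ∈ M := by
      have hsub := outP_submodular S A B
      have hiF : (A ∩ B) ∈ F := (hmemF _).2 ⟨hintne, fun h => hAproper
        (Finset.univ_subset_iff.1 (h ▸ Finset.inter_subset_left))⟩
      have huF : (A ∪ B) ∈ F := (hmemF _).2 ⟨hAne.mono Finset.subset_union_left, hunion⟩
      have hi := hA₁min _ hiF
      have hu := hA₁min _ huF
      have hBout : outP S B = lam := ((hmemM _).1 hBM).2.2
      refine (hmemM _).2 ⟨hintne, ((hmemF _).1 hiF).2, ?_⟩
      omega
    have : A ∩ B = A := Finset.eq_of_subset_of_card_le Finset.inter_subset_left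
      (hAmin _ hinterM)
    have hABsub : A ⊆ B := by
      intro x hx; have := this ▸ hx; exact (Finset.mem_inter.1 this).2
    exact hBneq (Finset.eq_of_subset_of_card_le hABsub hBcard.le).symm
  -- A is closed under multiplication and inverses
  have hstab : ∀ g ∈ A, A.image (g * ·) = A := by
    intro g hg
    rcases hblock g with h | h
    · exact h
    · exfalso
      have : g ∈ A.image (g * ·) ∩ A :=
        Finset.mem_inter.2 ⟨Finset.mem_image.2 ⟨1, h1A, mul_one g⟩, hg⟩
      rw [h] at this; exact absurd this (Finset.notMem_empty g)
  have hmul : ∀ g ∈ A, ∀ a ∈ A, g * a ∈ A := by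
    intro g hg a ha
    rw [← hstab g hg]; exact Finset.mem_image.2 ⟨a, ha, rfl⟩
  have hinv : ∀ g ∈ A, g⁻¹ ∈ A := by
    intro g hg
    have : (1 : G) ∈ A.image (g * ·) := by rw [hstab g hg]; exact h1A
    obtain ⟨a, ha, hga⟩ := Finset.mem_image.1 this
    have : g⁻¹ = a := mul_eq_one_iff_inv_eq.1 hga
    rwa [this]
  -- S is not contained in A
  have hSnA : ∃ s ∈ S, s ∉ A := by
    by_contra hcon
    push_neg at hcon
    set H : Subgroup G :=
      { carrier := ↑A
        mul_mem' := fun ha hb => hmul _ ha _ hb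
        one_mem' := h1A
        inv_mem' := fun ha => hinv _ ha } with hH
    have : Subgroup.closure (S : Set G) ≤ H := by
      rw [Subgroup.closure_le]; intro s hs; exact hcon s hs
    rw [hgen] at this
    refine hAproper (Finset.eq_univ_iff_forall.2 fun x => ?_)
    exact this (Subgroup.mem_top x)
  -- counting
  have hkey : ∀ x ∈ A, ∀ s ∈ S \ A, x * s ∉ A := by
    intro x hx s hs hxs
    have hs' := Finset.mem_sdiff.1 hs
    exact hs'.2 (by
      have := hmul _ (hinv _ hx) _ hxs
      rwa [← mul_assoc, inv_mul_cancel, one_mul] at this)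
  have hbound : A.card * (S \ A).card ≤ outP S A := by
    unfold outP
    calc A.card * (S \ A).card = ∑ x ∈ A, ∑ s ∈ S \ A, 1 := by
          simp [Finset.sum_const, smul_eq_mul]
      _ ≤ ∑ x ∈ A, ∑ s ∈ S, (if x ∈ A ∧ x * s ∉ A then 1 else 0) := by
          refine Finset.sum_le_sum fun x hx => ?_
          calc ∑ s ∈ S \ A, 1
              = ∑ s ∈ S \ A, (if x ∈ A ∧ x * s ∉ A then 1 else 0) := by
                refine Finset.sum_congr rfl fun s hs => ?_
                rw [if_pos ⟨hx, hkey x hx s hs⟩]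
            _ ≤ ∑ s ∈ S, (if x ∈ A ∧ x * s ∉ A then 1 else 0) :=
                Finset.sum_le_sum_of_subset (Finset.sdiff_subset)
      _ ≤ ∑ x : G, ∑ s ∈ S, (if x ∈ A ∧ x * s ∉ A then 1 else 0) :=
          Finset.sum_le_sum_of_subset (Finset.subset_univ A)
  -- case analysis on |A|
  have hk1 : 1 ≤ A.card := Finset.card_pos.2 hAne
  obtain ⟨s₀, hs₀S, hs₀A⟩ := hSnA
  have hm1 : 1 ≤ (S \ A).card := Finset.card_pos.2 ⟨s₀, Finset.mem_sdiff.2 ⟨hs₀S, hs₀A⟩⟩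
  have hiS : (S \ A).card + (S ∩ A).card = S.card := Finset.card_sdiff_add_card_inter S A
  have hSA : (S ∩ A).card ≤ A.card - 1 := by
    have hsub : S ∩ A ⊆ A.erase 1 := by
      intro s hs
      have hs' := Finset.mem_inter.1 hs
      exact Finset.mem_erase.2 ⟨fun h => h1 (h ▸ hs'.1), hs'.2⟩
    calc (S ∩ A).card ≤ (A.erase 1).card := Finset.card_le_card hsub
      _ = A.card - 1 := Finset.card_erase_of_mem h1A
  rw [← hAout]
  rcases Nat.lt_or_ge A.card 3 with hk | hk
  · interval_cases h : A.card <;> omega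
  · calc (3 : ℕ) ≤ A.card * 1 := by omega
      _ ≤ A.card * (S \ A).card := Nat.mul_le_mul_left _ hm1
      _ ≤ outP S A := hbound

end CutLemma


section Lap

variable {G : Type} [Group G] [Fintype G] [DecidableEq G]
variable (S : Finset G) (hS : ∀ s ∈ S, s⁻¹ ∈ S) (h1 : (1 : G) ∉ S)

lemma mem_div0_iff (f : G → ℤ) : f ∈ div0 G ↔ ∑ v, f v = 0 := Iff.rfl

lemma cayley_adj (v u : G) : (cayleyGraph G S hS h1).Adj v u ↔ v⁻¹ * u ∈ S := Iff.rfl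

lemma cayley_neighborFinset (v : G) :
    (cayleyGraph G S hS h1).neighborFinset v = S.image (v * ·) := by
  ext u
  rw [SimpleGraph.mem_neighborFinset, cayley_adj, Finset.mem_image]
  constructor
  · intro h; exact ⟨v⁻¹ * u, h, by group⟩
  · rintro ⟨s, hs, rfl⟩; rwa [inv_mul_cancel_left]

lemma cayley_lap_apply (f : G → ℤ) (v : G) :
    ((cayleyGraph G S hS h1).lapMatrix ℤ).mulVec f v = ∑ s ∈ S, (f v - f (v * s)) := by
  rw [SimpleGraph.lapMatrix_mulVec_apply, cayley_neighborFinset]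
  rw [Finset.sum_image (fun a _ b _ h => mul_left_cancel h)]
  have hdeg : (cayleyGraph G S hS h1).degree v = S.card := by
    rw [← SimpleGraph.card_neighborFinset_eq_degree, cayley_neighborFinset]
    exact Finset.card_image_of_injective _ (mul_right_injective v)
  rw [hdeg, Finset.sum_sub_distrib, Finset.sum_const, nsmul_eq_mul]

lemma lap_translate (f : G → ℤ) (g v : G) :
    ((cayleyGraph G S hS h1).lapMatrix ℤ).mulVec (fun x => f (g⁻¹ * x)) v =
      ((cayleyGraph G S hS h1).lapMatrix ℤ).mulVec f (g⁻¹ * v) := by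
  rw [cayley_lap_apply, cayley_lap_apply]
  exact Finset.sum_congr rfl fun s _ => by rw [mul_assoc]

end Lap
-- appended to part2 for testing
section Outflow

variable {G : Type} [Group G] [Fintype G] [DecidableEq G]
variable (S : Finset G) (hS : ∀ s ∈ S, s⁻¹ ∈ S) (h1 : (1 : G) ∉ S)

def outP' (S : Finset G) (A : Finset G) : ℕ :=
  ∑ x : G, ∑ s ∈ S, if x ∈ A ∧ x * s ∉ A then 1 else 0

lemma outP'_eq_on (A : Finset G) :
    outP' S A = ∑ x ∈ A, ∑ s ∈ S, (if x * s ∉ A then 1 else 0) := by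
  unfold outP'
  rw [← Finset.sum_subset (Finset.subset_univ A)]
  · exact Finset.sum_congr rfl fun x hx => Finset.sum_congr rfl fun s _ => by
      simp [hx]
  · intro x _ hx
    exact Finset.sum_eq_zero fun s _ => by simp [hx]

lemma outflow (f : G → ℤ)
    (hne : ((cayleyGraph G S hS h1).lapMatrix ℤ).mulVec f ≠ 0) :
    ∃ A : Finset G, A.Nonempty ∧ A ≠ Finset.univ ∧
      (outP' S A : ℤ) ≤ ∑ v ∈ A, ((cayleyGraph G S hS h1).lapMatrix ℤ).mulVec f v := by
  obtain ⟨v₀, -, hmax⟩ := Finset.exists_max_image Finset.univ f ⟨1, Finset.mem_univ 1⟩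
  set A : Finset G := Finset.univ.filter (fun v => f v = f v₀) with hA
  have hmem : ∀ v : G, v ∈ A ↔ f v = f v₀ := fun v => by simp [hA]
  refine ⟨A, ⟨v₀, (hmem v₀).2 rfl⟩, ?_, ?_⟩
  · intro huniv
    apply hne
    funext v
    rw [cayley_lap_apply S hS h1, Pi.zero_apply]
    refine Finset.sum_eq_zero fun s _ => ?_
    have h1' : f v = f v₀ := (hmem v).1 (huniv ▸ Finset.mem_univ v)
    have h2' : f (v * s) = f v₀ := (hmem (v * s)).1 (huniv ▸ Finset.mem_univ (v * s))
    rw [h1', h2', sub_self]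
  · rw [outP'_eq_on]
    push_cast
    refine Finset.sum_le_sum fun v hv => ?_
    rw [cayley_lap_apply S hS h1]
    refine Finset.sum_le_sum fun s _ => ?_
    by_cases hvs : v * s ∈ A
    · rw [if_neg (by simpa using hvs)]
      rw [(hmem v).1 hv, (hmem _).1 hvs, sub_self]
    · rw [if_pos (by simpa using hvs)]
      have hle : f (v * s) ≤ f v₀ := hmax _ (Finset.mem_univ _)
      have hne' : f (v * s) ≠ f v₀ := fun h => hvs ((hmem _).2 h)
      have := (hmem v).1 hv
      omega

end Outflow

section Quot

variable {G : Type} [Group G] [Fintype G] [DecidableEq G]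
variable (S : Finset G) (hS : ∀ s ∈ S, s⁻¹ ∈ S) (h1 : (1 : G) ∉ S)

/-- left translation as an additive endomorphism of degree-zero divisors -/
def Tdiv (g : G) : (div0 G) →+ (div0 G) where
  toFun f := ⟨fun v => (f : G → ℤ) (g⁻¹ * v), by
    rw [mem_div0_iff]
    rw [Fintype.sum_equiv (Equiv.mulLeft g⁻¹) (fun v => (f : G → ℤ) (g⁻¹ * v))
      (f : G → ℤ) (fun v => rfl)]
    exact f.2⟩
  map_zero' := rfl
  map_add' := fun a b => rfl

lemma Tdiv_coe (g : G) (f : div0 G) (v : G) :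
    ((Tdiv g f : div0 G) : G → ℤ) v = (f : G → ℤ) (g⁻¹ * v) := rfl

lemma Tdiv_comp (g h : G) (f : div0 G) : Tdiv g (Tdiv h f) = Tdiv (g * h) f := by
  ext v
  rw [Tdiv_coe, Tdiv_coe, Tdiv_coe, mul_inv_rev, mul_assoc]

end Quot
-- main assembly
section MainProof

variable {G : Type} [Group G] [Fintype G] [DecidableEq G]

theorem cayley_critical_group_not_cyclic' (hG : ¬ ∀ a b : G, a * b = b * a)
    (S : Finset G) (hS : ∀ s ∈ S, s⁻¹ ∈ S) (h1 : (1 : G) ∉ S)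
    (hgen : Subgroup.closure (S : Set G) = ⊤) (hcard : 3 ≤ S.card) :
    ¬ IsAddCyclic (criticalGroup (cayleyGraph G S hS h1)) := by
  intro hcyc
  push_neg at hG
  obtain ⟨a, b, hab⟩ := hG
  set u : G := (a * b) * (b * a)⁻¹ with hu_def
  have hu : u ≠ 1 := fun h => hab (mul_inv_eq_one.1 h)
  have hu' : u⁻¹ = (b * a) * (a * b)⁻¹ := by rw [hu_def, mul_inv_rev, inv_inv]
  have hui : u⁻¹ ≠ 1 := fun h => hu (by rwa [inv_eq_one] at h)
  -- the `W` subgroup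
  set X := cayleyGraph G S hS h1 with hX
  set W : AddSubgroup (div0 G) :=
    ((X.lapMatrix ℤ).mulVecLin.toAddMonoidHom.range).addSubgroupOf (div0 G) with hW
  -- Tdiv maps W into W
  have hTW : ∀ g : G, W ≤ W.comap (Tdiv g) := by
    intro g f hf
    rw [AddSubgroup.mem_comap, hW, AddSubgroup.mem_addSubgroupOf] at *
    obtain ⟨h, hh⟩ := AddMonoidHom.mem_range.1 hf
    refine AddMonoidHom.mem_range.2 ⟨fun x => h (g⁻¹ * x), ?_⟩
    rw [LinearMap.toAddMonoidHom_coe] at *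
    rw [Matrix.mulVecLin_apply] at *
    funext v
    rw [lap_translate S hS h1 h g v]
    show ((cayleyGraph G S hS h1).lapMatrix ℤ).mulVec h (g⁻¹ * v) = _
    rw [hh]
    rfl
  -- induced endomorphisms of the critical group
  set phi : G → (criticalGroup X →+ criticalGroup X) :=
    fun g => QuotientAddGroup.map W W (Tdiv g) (hTW g) with hphi
  have hq : ∀ (g : G) (f : div0 G),
      phi g (QuotientAddGroup.mk' W f) = QuotientAddGroup.mk' W (Tdiv g f) :=
    fun g f => rfl
  -- endomorphisms of a cyclic group commute
  obtain ⟨z, hz⟩ := hcyc.exists_generator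
  have hcomm : ∀ (F H : criticalGroup X →+ criticalGroup X) (x : criticalGroup X),
      F (H x) = H (F x) := by
    intro F H x
    obtain ⟨k, hk⟩ := AddSubgroup.mem_zmultiples_iff.1 (hz x)
    obtain ⟨n, hn⟩ := AddSubgroup.mem_zmultiples_iff.1 (hz (H z))
    obtain ⟨m, hm⟩ := AddSubgroup.mem_zmultiples_iff.1 (hz (F z))
    have e1 : F (H z) = (n * m) • z := by rw [← hn, map_zsmul, ← hm, smul_smul]
    have e2 : H (F z) = (m * n) • z := by rw [← hm, map_zsmul, ← hn, smul_smul]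
    rw [← hk, map_zsmul H k z, map_zsmul F k (H z), map_zsmul F k z, map_zsmul H k (F z),
      e1, e2, mul_comm]
  -- the crucial degree-zero divisor
  have hf₀mem : (fun v => (if v = (a*b)⁻¹ then (1:ℤ) else 0)
      - (if v = (b*a)⁻¹ then (1:ℤ) else 0)) ∈ div0 G := by
    rw [mem_div0_iff]
    simp [Finset.sum_sub_distrib]
  set f₀ : div0 G := ⟨_, hf₀mem⟩ with hf₀
  -- the two translates agree in the critical group
  have key : QuotientAddGroup.mk' W (Tdiv (a*b) f₀) = QuotientAddGroup.mk' W (Tdiv (b*a) f₀) := by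
    calc QuotientAddGroup.mk' W (Tdiv (a*b) f₀)
        = QuotientAddGroup.mk' W (Tdiv a (Tdiv b f₀)) := by rw [Tdiv_comp]
      _ = @id (div0 G ⧸ W) (phi a (phi b (QuotientAddGroup.mk' W f₀))) := by rw [hq, hq]; rfl
      _ = @id (div0 G ⧸ W) (phi b (phi a (QuotientAddGroup.mk' W f₀))) := hcomm _ _ _
      _ = QuotientAddGroup.mk' W (Tdiv b (Tdiv a f₀)) := by rw [hq, hq]; rfl
      _ = QuotientAddGroup.mk' W (Tdiv (b*a) f₀) := by rw [Tdiv_comp]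
  obtain ⟨w, hwW, hw⟩ := (QuotientAddGroup.mk'_eq_mk' W).1 key
  -- w as a function
  have hwcoe : (w : G → ℤ) = fun v =>
      ((if v = u⁻¹ then (1:ℤ) else 0) - (if v = 1 then (1:ℤ) else 0))
      - ((if v = 1 then (1:ℤ) else 0) - (if v = u then (1:ℤ) else 0)) := by
    have hw' : w = Tdiv (b*a) f₀ - Tdiv (a*b) f₀ := by
      rw [← hw]; abel
    rw [hw']
    rw [AddSubgroup.coe_sub]
    funext v
    show ((f₀ : G → ℤ) ((b*a)⁻¹ * v)) - ((f₀ : G → ℤ) ((a*b)⁻¹ * v)) = _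
    have hcond : ∀ (c e v : G), ((c⁻¹ * v = e) = (v = c * e)) := fun c e v =>
      propext ⟨fun h => by rw [← h, mul_inv_cancel_left], fun h => by rw [h, inv_mul_cancel_left]⟩
    show ((if (b*a)⁻¹ * v = (a*b)⁻¹ then (1:ℤ) else 0)
        - (if (b*a)⁻¹ * v = (b*a)⁻¹ then (1:ℤ) else 0))
      - ((if (a*b)⁻¹ * v = (a*b)⁻¹ then (1:ℤ) else 0)
        - (if (a*b)⁻¹ * v = (b*a)⁻¹ then (1:ℤ) else 0)) = _
    simp only [hcond, mul_inv_cancel, ← hu', hu_def]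
  -- get the Laplacian preimage
  rw [hW, AddSubgroup.mem_addSubgroupOf] at hwW
  obtain ⟨h, hh⟩ := AddMonoidHom.mem_range.1 hwW
  rw [LinearMap.toAddMonoidHom_coe, Matrix.mulVecLin_apply] at hh
  have hLw : ((cayleyGraph G S hS h1).lapMatrix ℤ).mulVec h = (w : G → ℤ) := hh
  -- nonzero
  have hne : ((cayleyGraph G S hS h1).lapMatrix ℤ).mulVec h ≠ 0 := by
    rw [hLw, hwcoe]
    intro hzero
    have := congrFun hzero 1
    simp only [Pi.zero_apply] at this
    have h2' : (1:G) ≠ u⁻¹ := fun e => hui e.symm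
    have h3' : (1:G) ≠ u := fun e => hu e.symm
    simp [h2', h3'] at this
  -- outflow + cut lemma give contradiction
  obtain ⟨A, hAne, hAproper, hbound⟩ := outflow S hS h1 h hne
  have hnt : ∃ g : G, g ≠ 1 := ⟨u, hu⟩
  have hcut : 3 ≤ outP S A := cut_lemma S hS h1 hgen hcard hnt A hAne hAproper
  have houtP : outP' S A = outP S A := rfl
  have hsum : ∑ v ∈ A, ((cayleyGraph G S hS h1).lapMatrix ℤ).mulVec h v ≤ 2 := by
    rw [hLw, hwcoe]
    calc ∑ v ∈ A, (((if v = u⁻¹ then (1:ℤ) else 0) - (if v = 1 then (1:ℤ) else 0))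
          - ((if v = 1 then (1:ℤ) else 0) - (if v = u then (1:ℤ) else 0)))
        ≤ ∑ v ∈ A, ((if v = u⁻¹ then (1:ℤ) else 0) + (if v = u then (1:ℤ) else 0)) := by
          refine Finset.sum_le_sum fun v _ => ?_
          split_ifs <;> omega
      _ = (if u⁻¹ ∈ A then (1:ℤ) else 0) + (if u ∈ A then (1:ℤ) else 0) := by
          rw [Finset.sum_add_distrib, Finset.sum_ite_eq' A u⁻¹ (fun _ => (1:ℤ)),
            Finset.sum_ite_eq' A u (fun _ => (1:ℤ))]
      _ ≤ 2 := by split_ifs <;> omega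
  rw [houtP] at hbound
  have : (3 : ℤ) ≤ 2 := by
    calc (3:ℤ) ≤ (outP S A : ℤ) := by exact_mod_cast hcut
      _ ≤ ∑ v ∈ A, ((cayleyGraph G S hS h1).lapMatrix ℤ).mulVec h v := hbound
      _ ≤ 2 := hsum
  omega

end MainProof

/-- Let `X = Cay(G, S)` be a connected Cayley graph of a finite nonabelian
group `G`, where `S = S⁻¹` is a generating set of non-identity elements with
`|S| ≥ 3`. Then the Jacobian (critical group) of `X` is not cyclic. -/
theorem cayley_critical_group_not_cyclic (G : Type) [Group G] [Fintype G]
    [DecidableEq G] (hG : ¬ ∀ a b : G, a * b = b * a)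
    (S : Finset G) (hS : ∀ s ∈ S, s⁻¹ ∈ S) (h1 : (1 : G) ∉ S)
    (hgen : Subgroup.closure (S : Set G) = ⊤) (hcard : 3 ≤ S.card) :
    ¬ IsAddCyclic (criticalGroup (cayleyGraph G S hS h1)) := by
  exact cayley_critical_group_not_cyclic' hG S hS h1 hgen hcard
end

section
/- The edge-connectivity of a finite connected vertex-transitive graph equals its valency. -/
/-- The edge-connectivity of a graph `X` on a finite vertex set: the least
cardinality of a set of edges whose removal disconnects `X`. -/
noncomputable def edgeConnectivity {V : Type} [Fintype V]
    (X : SimpleGraph V) : ℕ :=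
  sInf {n | ∃ F : Finset (Sym2 V), ↑F ⊆ X.edgeSet ∧ F.card = n ∧
    ¬ (X.deleteEdges ↑F).Connected}

open Finset
set_option linter.unusedSectionVars false
set_option linter.unusedVariables false
set_option maxHeartbeats 1000000

namespace ECAux

variable {V : Type} [Fintype V] [DecidableEq V] (X : SimpleGraph V) [DecidableRel X.Adj]


variable {V : Type} [Fintype V] [DecidableEq V] (X : SimpleGraph V) [DecidableRel X.Adj]

def cutPairs (A : Finset V) : Finset (V × V) :=
  Finset.univ.filter (fun p => X.Adj p.1 p.2 ∧ p.1 ∈ A ∧ p.2 ∉ A)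

def d (A : Finset V) : ℕ := (cutPairs X A).card

lemma cutPairs_compl (A : Finset V) : cutPairs X Aᶜ = (cutPairs X A).image Prod.swap := by
  ext ⟨x, y⟩
  simp only [cutPairs, mem_filter, mem_univ, true_and, Finset.mem_compl, not_not,
    Finset.mem_image, Prod.exists, Prod.swap_prod_mk, Prod.mk.injEq]
  constructor
  · rintro ⟨h1, h2, h3⟩; exact ⟨y, x, ⟨h1.symm, h3, h2⟩, rfl, rfl⟩
  · rintro ⟨a, b, ⟨h1, h2, h3⟩, rfl, rfl⟩; exact ⟨h1.symm, h3, h2⟩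

lemma d_compl (A : Finset V) : d X Aᶜ = d X A := by
  rw [d, cutPairs_compl, Finset.card_image_of_injective _ Prod.swap_injective]; rfl

lemma d_submod (A B : Finset V) :
    d X (A ∩ B) + d X (A ∪ B) ≤ d X A + d X B := by
  classical
  simp only [d, cutPairs, Finset.card_filter]
  rw [← Finset.sum_add_distrib, ← Finset.sum_add_distrib]
  apply Finset.sum_le_sum
  rintro ⟨x, y⟩ _
  by_cases hadj : X.Adj x y
  · by_cases hxA : x ∈ A <;> by_cases hxB : x ∈ B <;> by_cases hyA : y ∈ A <;>
      by_cases hyB : y ∈ B <;>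
      simp [hadj, hxA, hxB, hyA, hyB]
  · simp [hadj]

lemma d_posimod (A B : Finset V) :
    d X (A \ B) + d X (B \ A) ≤ d X A + d X B := by
  have h := d_submod X A Bᶜ
  rw [d_compl] at h
  have e1 : A ∩ Bᶜ = A \ B := by ext x; simp [Finset.mem_sdiff]
  have e2 : d X (A ∪ Bᶜ) = d X (B \ A) := by
    rw [← d_compl X (A ∪ Bᶜ)]
    congr 1
    ext x; simp [Finset.mem_sdiff, and_comm]
  rw [e1, e2] at h
  exact h


variable {V : Type} [Fintype V] [DecidableEq V] (X : SimpleGraph V) [DecidableRel X.Adj]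



lemma d_map (φ : X ≃g X) (A : Finset V) :
    d X (A.map φ.toEquiv.toEmbedding) = d X A := by
  classical
  apply Finset.card_nbij' (fun p => (φ.symm p.1, φ.symm p.2)) (fun p => (φ p.1, φ p.2))
  · rintro ⟨x, y⟩ hp
    simp only [Finset.mem_coe, cutPairs, mem_filter, mem_univ, true_and, Finset.mem_map_equiv] at hp ⊢
    exact ⟨φ.symm.map_adj_iff.mpr hp.1, hp.2.1, hp.2.2⟩
  · rintro ⟨x, y⟩ hp
    simp only [Finset.mem_coe, cutPairs, mem_filter, mem_univ, true_and, Finset.mem_map_equiv] at hp ⊢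
    refine ⟨φ.map_adj_iff.mpr hp.1, ?_, ?_⟩
    · rw [show φ.toEquiv.symm (φ x) = x from φ.toEquiv.symm_apply_apply x]; exact hp.2.1
    · rw [show φ.toEquiv.symm (φ y) = y from φ.toEquiv.symm_apply_apply y]; exact hp.2.2
  · rintro ⟨x, y⟩ _; simp
  · rintro ⟨x, y⟩ _; simp

lemma d_eq_sum (A : Finset V) :
    d X A = ∑ u ∈ A, ((Aᶜ).filter (X.Adj u)).card := by
  classical
  rw [d, Finset.card_eq_sum_card_fiberwise (f := Prod.fst) (t := A)
    (by rintro ⟨x, y⟩ hp; exact (Finset.mem_filter.mp hp).2.2.1)]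
  apply Finset.sum_congr rfl
  intro u hu
  apply Finset.card_nbij' (fun p => p.2) (fun y => (u, y))
  · rintro ⟨x, y⟩ hp
    simp only [Finset.mem_coe, cutPairs, mem_filter, mem_univ, true_and, Finset.mem_compl] at hp ⊢
    obtain ⟨⟨h1, h2, h3⟩, h4⟩ := hp
    subst h4
    exact ⟨h3, h1⟩
  · intro y hy
    simp only [Finset.mem_coe, cutPairs, mem_filter, mem_univ, true_and, Finset.mem_compl] at hy ⊢
    exact ⟨⟨hy.2, hu, hy.1⟩, trivial⟩
  · rintro ⟨x, y⟩ hp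
    simp only [Finset.mem_coe, cutPairs, mem_filter] at hp
    exact Prod.ext hp.2.symm rfl
  · intro _ _; rfl

variable {V : Type} [Fintype V] [DecidableEq V] (X : SimpleGraph V) [DecidableRel X.Adj]



lemma exists_cross {A : Finset V} {u v : V} (w : X.Walk u v) (hu : u ∈ A) (hv : v ∉ A) :
    ∃ x y, X.Adj x y ∧ x ∈ A ∧ y ∉ A := by
  induction w with
  | nil => exact absurd hu hv
  | cons h p ih =>
    rename_i a b c
    by_cases hb : b ∈ A
    · exact ih hb hv
    · exact ⟨a, b, h, hu, hb⟩

lemma d_pos (hconn : X.Connected) {A : Finset V} (hA : A.Nonempty) (hA' : A ≠ Finset.univ) :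
    1 ≤ d X A := by
  obtain ⟨u, hu⟩ := hA
  have : ∃ v, v ∉ A := by
    by_contra h
    push_neg at h
    exact hA' (Finset.eq_univ_iff_forall.mpr h)
  obtain ⟨v, hv⟩ := this
  obtain ⟨w⟩ := hconn.preconnected u v
  obtain ⟨x, y, hxy, hx, hy⟩ := exists_cross X w hu hv
  exact Finset.card_pos.mpr ⟨(x, y), by simp [cutPairs, hxy, hx, hy]⟩

/-- A disconnecting edge set contains a full vertex cut. -/
lemma exists_cut_of_disconnecting (hconn : X.Connected) {F : Finset (Sym2 V)}
    (hF : ↑F ⊆ X.edgeSet) (hdis : ¬ (X.deleteEdges ↑F).Connected) :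
    ∃ A : Finset V, A.Nonempty ∧ A ≠ Finset.univ ∧ d X A ≤ F.card := by
  classical
  have hne : Nonempty V := hconn.nonempty
  have hpre : ¬ (X.deleteEdges (↑F : Set (Sym2 V))).Preconnected := by
    intro h; exact hdis ⟨h⟩
  rw [SimpleGraph.Preconnected] at hpre
  push_neg at hpre
  obtain ⟨u, v, huv⟩ := hpre
  refine ⟨Finset.univ.filter (fun w => (X.deleteEdges (↑F : Set (Sym2 V))).Reachable u w),
    ⟨u, by simp [SimpleGraph.Reachable.refl]⟩, ?_, ?_⟩
  · intro h
    have : v ∈ Finset.univ.filter (fun w => (X.deleteEdges (↑F : Set (Sym2 V))).Reachable u w) := by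
      rw [h]; exact Finset.mem_univ v
    exact huv (Finset.mem_filter.mp this).2
  · unfold d; refine Finset.card_le_card_of_injOn (s := cutPairs X _) (t := F) (fun p : V × V => s(p.1, p.2)) ?_ ?_
    · rintro ⟨x, y⟩ hp
      simp only [Finset.mem_coe, cutPairs, mem_filter, mem_univ, true_and] at hp
      obtain ⟨hadj, hx, hy⟩ := hp
      by_contra hmem
      apply hy
      refine hx.trans ?_
      exact SimpleGraph.Adj.reachable (by rw [SimpleGraph.deleteEdges_adj]; exact ⟨hadj, hmem⟩)
    · rintro ⟨x, y⟩ hx ⟨a, b⟩ ha heq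
      simp only [Finset.coe_filter, Set.mem_setOf_eq, cutPairs, mem_filter, mem_univ,
        true_and] at hx ha
      replace heq := (Sym2.mk_eq_mk_iff (p := (x, y)) (q := (a, b))).mp heq
      rcases heq with h | h
      · exact h
      · simp only [Prod.swap_prod_mk, Prod.mk.injEq] at h
        obtain ⟨rfl, rfl⟩ := h
        exact absurd ha.2.1 hx.2.2

/-- Deleting the star at a vertex disconnects (given another vertex). -/
lemma star_disconnects {v w : V} (hvw : w ≠ v) :
    ¬ (X.deleteEdges ↑(X.incidenceFinset v)).Connected := by
  intro h
  obtain ⟨p⟩ := h.preconnected v w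
  cases p with
  | nil => exact hvw rfl
  | cons h' p' =>
    rw [SimpleGraph.deleteEdges_adj] at h'
    exact h'.2 (by simp [SimpleGraph.mem_incidenceFinset, SimpleGraph.incidenceSet,
      h'.1, SimpleGraph.mk'_mem_incidenceSet_left_iff])


variable {V : Type} [Fintype V] [DecidableEq V] (X : SimpleGraph V) [DecidableRel X.Adj]




lemma key {k : ℕ} (hconn : X.Connected) (htrans : ∀ u v : V, ∃ φ : X ≃g X, φ u = v)
    (hreg : X.IsRegularOfDegree k) :
    ∀ A : Finset V, A.Nonempty → A ≠ Finset.univ → k ≤ d X A := by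
  classical
  by_contra hcon
  push_neg at hcon
  obtain ⟨A₁, hA₁ne, hA₁pr, hA₁lt⟩ := hcon
  set D := {n | ∃ B : Finset V, B.Nonempty ∧ B ≠ Finset.univ ∧ d X B = n} with hDdef
  have hD : d X A₁ ∈ D := ⟨A₁, hA₁ne, hA₁pr, rfl⟩
  set lam := sInf D with hlamdef
  obtain ⟨A₂, hA₂ne, hA₂pr, hA₂d⟩ := Nat.sInf_mem (⟨_, hD⟩ : D.Nonempty)
  have hlam_le : ∀ B : Finset V, B.Nonempty → B ≠ Finset.univ → lam ≤ d X B :=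
    fun B h1 h2 => Nat.sInf_le ⟨B, h1, h2, rfl⟩
  have hlam_lt : lam < k := lt_of_le_of_lt (hlam_le A₁ hA₁ne hA₁pr) hA₁lt
  set C := {m | ∃ B : Finset V, B.Nonempty ∧ B ≠ Finset.univ ∧ d X B = lam ∧ B.card = m}
    with hCdef
  have hC : A₂.card ∈ C := ⟨A₂, hA₂ne, hA₂pr, hA₂d, rfl⟩
  obtain ⟨A, hAne, hApr, hAd, hAcard⟩ := Nat.sInf_mem (⟨_, hC⟩ : C.Nonempty)
  have hmin : ∀ B : Finset V, B.Nonempty → B ≠ Finset.univ → d X B = lam →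
      A.card ≤ B.card := by
    intro B h1 h2 h3
    rw [hAcard]
    exact Nat.sInf_le ⟨B, h1, h2, h3, rfl⟩
  -- atoms are equal or disjoint
  have atom : ∀ φ : X ≃g X, (A ∩ A.map φ.toEquiv.toEmbedding).Nonempty →
      A.map φ.toEquiv.toEmbedding = A := by
    intro φ hint
    set B := A.map φ.toEquiv.toEmbedding with hBdef
    have hBcard : B.card = A.card := Finset.card_map _
    have hBd : d X B = lam := by rw [hBdef, d_map, hAd]
    have hBne : B.Nonempty := hAne.map
    have hBpr : B ≠ Finset.univ := by
      intro h
      apply hApr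
      apply Finset.eq_univ_of_card
      rw [← hBcard, h, Finset.card_univ]
    by_contra hne
    have hAB : ¬ A ⊆ B := by
      intro hsub
      exact hne (Finset.eq_of_subset_of_card_le hsub (le_of_eq hBcard)).symm
    have hBA : ¬ B ⊆ A := by
      intro hsub
      exact hne (Finset.eq_of_subset_of_card_le hsub (ge_of_eq hBcard))
    have hAdiffB : (A \ B).Nonempty := Finset.sdiff_nonempty.mpr hAB
    have hBdiffA : (B \ A).Nonempty := Finset.sdiff_nonempty.mpr hBA
    obtain ⟨z, hz⟩ := hint
    rw [Finset.mem_inter] at hz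
    by_cases hU : A ∪ B = Finset.univ
    · -- posimodular case
      have h1 : lam ≤ d X (A \ B) := by
        apply hlam_le _ hAdiffB
        intro h
        obtain ⟨b, hb⟩ := hBne
        have : b ∈ A \ B := h ▸ Finset.mem_univ b
        exact (Finset.mem_sdiff.mp this).2 hb
      have h2 : lam ≤ d X (B \ A) := by
        apply hlam_le _ hBdiffA
        intro h
        obtain ⟨a, ha⟩ := hAne
        have : a ∈ B \ A := h ▸ Finset.mem_univ a
        exact (Finset.mem_sdiff.mp this).2 ha
      have h3 := d_posimod X A B
      rw [hAd, hBd] at h3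
      have h4 : d X (A \ B) = lam := by omega
      have h5 := hmin _ hAdiffB (by
        intro h
        obtain ⟨b, hb⟩ := hBne
        have : b ∈ A \ B := h ▸ Finset.mem_univ b
        exact (Finset.mem_sdiff.mp this).2 hb) h4
      have h6 : (A \ B).card < A.card := by
        apply Finset.card_lt_card
        constructor
        · exact Finset.sdiff_subset
        · intro hsub
          have := Finset.mem_sdiff.mp (hsub hz.1)
          exact this.2 hz.2
      omega
    · -- submodular case
      have hIne : (A ∩ B).Nonempty := ⟨z, Finset.mem_inter.mpr hz⟩
      have hIpr : A ∩ B ≠ Finset.univ := by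
        intro h
        apply hApr
        apply Finset.eq_univ_iff_forall.mpr
        intro x
        have : x ∈ A ∩ B := h ▸ Finset.mem_univ x
        exact (Finset.mem_inter.mp this).1
      have h1 : lam ≤ d X (A ∩ B) := hlam_le _ hIne hIpr
      have h2 : lam ≤ d X (A ∪ B) := hlam_le _ (hAne.mono Finset.subset_union_left) hU
      have h3 := d_submod X A B
      rw [hAd, hBd] at h3
      have h4 : d X (A ∩ B) = lam := by omega
      have h5 := hmin _ hIne hIpr h4
      have h6 : A ∩ B = A :=
        Finset.eq_of_subset_of_card_le Finset.inter_subset_left h5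
      apply hAB
      intro x hx
      have hx' : x ∈ A ∩ B := by rw [h6]; exact hx
      exact (Finset.mem_inter.mp hx').2
  -- stabilizer transitivity
  have stab : ∀ u ∈ A, ∀ v ∈ A, ∃ φ : X ≃g X, φ u = v ∧
      A.map φ.toEquiv.toEmbedding = A := by
    intro u hu v hv
    obtain ⟨φ, hφ⟩ := htrans u v
    refine ⟨φ, hφ, atom φ ⟨v, Finset.mem_inter.mpr ⟨hv, ?_⟩⟩⟩
    rw [← hφ]
    exact Finset.mem_map_of_mem _ hu
  -- degrees within A are constant
  have deg_split : ∀ u : V,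
      (A.filter (X.Adj u)).card + ((Aᶜ).filter (X.Adj u)).card = k := by
    intro u
    have hdisj : Disjoint (A.filter (X.Adj u)) ((Aᶜ).filter (X.Adj u)) :=
      Finset.disjoint_filter_filter disjoint_compl_right
    rw [← Finset.card_union_of_disjoint hdisj, ← Finset.filter_union,
      Finset.union_compl]
    have : Finset.univ.filter (X.Adj u) = X.neighborFinset u := by
      rw [SimpleGraph.neighborFinset_eq_filter]
    rw [this]
    exact hreg u
  have in_const : ∀ u ∈ A, ∀ v ∈ A,
      (A.filter (X.Adj u)).card = (A.filter (X.Adj v)).card := by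
    intro u hu v hv
    obtain ⟨φ, hφu, hφA⟩ := stab u hu v hv
    apply Finset.card_nbij' (fun w => φ w) (fun w => φ.symm w)
    · intro w hw
      rw [Finset.mem_coe, Finset.mem_filter] at hw ⊢
      constructor
      · have h' := Finset.mem_map_of_mem φ.toEquiv.toEmbedding hw.1
        rw [hφA] at h'
        exact h'
      · rw [← hφu]; exact φ.map_adj_iff.mpr hw.2
    · intro w hw
      rw [Finset.mem_coe, Finset.mem_filter] at hw ⊢
      constructor
      · have : w ∈ A.map φ.toEquiv.toEmbedding := by rw [hφA]; exact hw.1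
        rwa [Finset.mem_map_equiv] at this
      · have : X.Adj (φ u) w := hφu ▸ hw.2
        have h2 := φ.symm.map_adj_iff.mpr this
        rwa [show φ.symm (φ u) = u from φ.toEquiv.symm_apply_apply u] at h2
    · intro w _; exact φ.toEquiv.symm_apply_apply w
    · intro w _; exact φ.toEquiv.apply_symm_apply w
  have hlam1 : 1 ≤ lam := hAd ▸ d_pos X hconn hAne hApr
  obtain ⟨a₀, ha₀⟩ := hAne
  set m := ((Aᶜ).filter (X.Adj a₀)).card with hmdef
  set k' := (A.filter (X.Adj a₀)).card with hk'def
  have hkm : k' + m = k := deg_split a₀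
  have hout : ∀ u ∈ A, ((Aᶜ).filter (X.Adj u)).card = m := by
    intro u hu
    have h1 := deg_split u
    have h2 := in_const u hu a₀ ha₀
    omega
  have hsum : d X A = A.card * m := by
    rw [d_eq_sum]
    rw [Finset.sum_congr rfl hout, Finset.sum_const, smul_eq_mul]
  have hk'lt : k' < A.card := by
    have hsub : A.filter (X.Adj a₀) ⊆ A.erase a₀ := by
      intro w hw
      rw [Finset.mem_filter] at hw
      exact Finset.mem_erase.mpr ⟨hw.2.ne', hw.1⟩
    have h1 : k' ≤ (A.erase a₀).card := Finset.card_le_card hsub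
    rw [Finset.card_erase_of_mem ha₀] at h1
    have h2 : 1 ≤ A.card := Finset.card_pos.mpr ⟨a₀, ha₀⟩
    omega
  have hm1 : 1 ≤ m := by
    rcases Nat.eq_zero_or_pos m with h | h
    · rw [h, Nat.mul_zero] at hsum; omega
    · exact h
  -- final arithmetic contradiction
  have harith : A.card * m < k' + m := by
    have h := hlam_lt
    rw [← hAd, hsum, ← hkm] at h
    exact h
  obtain ⟨a', ha'⟩ : ∃ a', A.card = a' + 1 := ⟨A.card - 1, by omega⟩
  obtain ⟨m', hm'⟩ : ∃ m', m = m' + 1 := ⟨m - 1, by omega⟩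
  rw [ha', hm'] at harith
  rw [ha'] at hk'lt
  have hexp : (a' + 1) * (m' + 1) = a' * m' + a' + m' + 1 := by ring
  rw [hexp] at harith
  generalize a' * m' = t at harith
  omega


end ECAux

/-- The edge-connectivity of a finite connected vertex-transitive graph equals
its valency (Mader, Watkins). -/
theorem edgeConnectivity_eq_degree_of_vertex_transitive {V : Type} [Fintype V]
    [DecidableEq V] (X : SimpleGraph V) [DecidableRel X.Adj] (k : ℕ)
    (hconn : X.Connected) (htrans : ∀ u v : V, ∃ φ : X ≃g X, φ u = v)
    (hreg : X.IsRegularOfDegree k) :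
    edgeConnectivity X = k := by
  classical
  rw [edgeConnectivity]
  by_cases hnt : Nontrivial V
  · obtain ⟨v⟩ := hconn.nonempty
    obtain ⟨w, hw⟩ := exists_ne v
    have hk_mem : k ∈ {n | ∃ F : Finset (Sym2 V), ↑F ⊆ X.edgeSet ∧ F.card = n ∧
        ¬ (X.deleteEdges ↑F).Connected} := by
      refine ⟨X.incidenceFinset v, ?_, ?_, ECAux.star_disconnects X hw⟩
      · intro e he
        rw [Finset.mem_coe, SimpleGraph.mem_incidenceFinset] at he
        exact X.incidenceSet_subset v he
      · rw [SimpleGraph.card_incidenceFinset_eq_degree]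
        exact hreg v
    refine le_antisymm (Nat.sInf_le hk_mem) (le_csInf ⟨k, hk_mem⟩ ?_)
    rintro n ⟨F, hF, hcard, hdis⟩
    obtain ⟨A, hAne, hApr, hAd⟩ := ECAux.exists_cut_of_disconnecting X hconn hF hdis
    calc k ≤ ECAux.d X A := ECAux.key X hconn htrans hreg A hAne hApr
    _ ≤ F.card := hAd
    _ = n := hcard
  · have hsub : Subsingleton V := not_nontrivial_iff_subsingleton.mp hnt
    have hS : {n | ∃ F : Finset (Sym2 V), ↑F ⊆ X.edgeSet ∧ F.card = n ∧
        ¬ (X.deleteEdges ↑F).Connected} = ∅ := by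
      ext n
      simp only [Set.mem_setOf_eq, Set.mem_empty_iff_false, iff_false, not_exists]
      intro F
      rintro ⟨hF, hcard, hdis⟩
      apply hdis
      have : Nonempty V := hconn.nonempty
      constructor
      intro a b
      rw [Subsingleton.elim a b]
    rw [hS, Nat.sInf_empty]
    obtain ⟨v⟩ := hconn.nonempty
    have : X.degree v = k := hreg v
    rw [← this, SimpleGraph.degree]
    symm
    rw [Finset.card_eq_zero, Finset.eq_empty_iff_forall_notMem]
    intro w hw
    rw [SimpleGraph.mem_neighborFinset] at hw
    exact X.irrefl (Subsingleton.elim v w ▸ hw)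
end
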